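/- arXiv:2406.15587 — 9 statements merged into one kernel-verified Lean document; each statement's English description precedes it below -/
import Mathlib

section
/- Every correlation in S1^[AB^O BC^L] satisfies the no-signalling constraints defining S2; that is, S1^[AB^O BC^L] is contained in S2. -/
open Finset

/-- A correlation in the minimal 3-chain scenario: `p a b c x z = p(a,b,c|x,z)`. -/
abbrev Corr : Type := Fin 2 → Fin 2 → Fin 2 → Fin 2 → Fin 2 → ℝ

/-- `p` is a valid correlation: nonnegative and normalized for every input pair. -/
def IsCorrelation (p : Corr) : Prop :=
  (∀ a b c x z, 0 ≤ p a b c x z) ∧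
  (∀ x z, ∑ a : Fin 2, ∑ b : Fin 2, ∑ c : Fin 2, p a b c x z = 1)

/-- Probability weights on the finite set `Fin n`. -/
def IsWeights {n : ℕ} (q : Fin n → ℝ) : Prop :=
  (∀ l, 0 ≤ q l) ∧ ∑ l, q l = 1

/-- A no-signalling box with binary outputs and input sets `X`, `Y`. -/
def IsNSBox {X Y : Type} [Fintype X] [Fintype Y]
    (nb : Fin 2 → Fin 2 → X → Y → ℝ) : Prop :=
  (∀ o1 o2 x y, 0 ≤ nb o1 o2 x y) ∧
  (∀ x y, ∑ o1 : Fin 2, ∑ o2 : Fin 2, nb o1 o2 x y = 1) ∧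
  (∀ o1 x y y', ∑ o2 : Fin 2, nb o1 o2 x y = ∑ o2 : Fin 2, nb o1 o2 x y') ∧
  (∀ o2 x x' y, ∑ o1 : Fin 2, nb o1 o2 x y = ∑ o1 : Fin 2, nb o1 o2 x' y)

/-- `S0`: classical 3-chain correlations. -/
def MemS0 (p : Corr) : Prop :=
  ∃ (n1 n2 : ℕ) (q1 : Fin n1 → ℝ) (q2 : Fin n2 → ℝ)
    (pA : Fin 2 → Fin 2 → Fin n1 → ℝ)
    (pB : Fin 2 → Fin n1 → Fin n2 → ℝ)
    (pC : Fin 2 → Fin 2 → Fin n2 → ℝ),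
    IsWeights q1 ∧ IsWeights q2 ∧
    (∀ a x l1, 0 ≤ pA a x l1) ∧ (∀ x l1, ∑ a : Fin 2, pA a x l1 = 1) ∧
    (∀ b l1 l2, 0 ≤ pB b l1 l2) ∧ (∀ l1 l2, ∑ b : Fin 2, pB b l1 l2 = 1) ∧
    (∀ c z l2, 0 ≤ pC c z l2) ∧ (∀ z l2, ∑ c : Fin 2, pC c z l2 = 1) ∧
    (∀ a b c x z, p a b c x z =
      ∑ l1, ∑ l2, q1 l1 * q2 l2 * pA a x l1 * pB b l1 l2 * pC c z l2)

/-- `S1^[AB^O BC^L]`: a no-signalling (OPT) source between Alice and Bob,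
a classical source between Bob and Charlie. -/
def MemS1ABo (p : Corr) : Prop :=
  ∃ (n : ℕ) (q : Fin n → ℝ)
    (nb : Fin 2 → Fin 2 → Fin 2 → Fin n → ℝ)
    (pC : Fin 2 → Fin 2 → Fin n → ℝ),
    IsWeights q ∧ IsNSBox nb ∧
    (∀ c z l, 0 ≤ pC c z l) ∧ (∀ z l, ∑ c : Fin 2, pC c z l = 1) ∧
    (∀ a b c x z, p a b c x z = ∑ l, q l * nb a b x l * pC c z l)

/-- `S1^[AB^L BC^O]`: a classical source between Alice and Bob,
a no-signalling (OPT) source between Bob and Charlie. -/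
def MemS1BCo (p : Corr) : Prop :=
  ∃ (n : ℕ) (q : Fin n → ℝ)
    (pA : Fin 2 → Fin 2 → Fin n → ℝ)
    (nb : Fin 2 → Fin 2 → Fin n → Fin 2 → ℝ),
    IsWeights q ∧
    (∀ a x l, 0 ≤ pA a x l) ∧ (∀ x l, ∑ a : Fin 2, pA a x l = 1) ∧
    IsNSBox nb ∧
    (∀ a b c x z, p a b c x z = ∑ l, q l * pA a x l * nb b c l z)

/-- `S2`: the no-signalling constraints of the 3-chain network. -/
def MemS2 (p : Corr) : Prop :=
  (∃ (pA : Fin 2 → Fin 2 → ℝ) (pC : Fin 2 → Fin 2 → ℝ),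
    (∀ a x, 0 ≤ pA a x) ∧ (∀ x, ∑ a : Fin 2, pA a x = 1) ∧
    (∀ c z, 0 ≤ pC c z) ∧ (∀ z, ∑ c : Fin 2, pC c z = 1) ∧
    (∀ a c x z, ∑ b : Fin 2, p a b c x z = pA a x * pC c z)) ∧
  (∀ a b x z z', ∑ c : Fin 2, p a b c x z = ∑ c : Fin 2, p a b c x z') ∧
  (∀ b c x x' z, ∑ a : Fin 2, p a b c x z = ∑ a : Fin 2, p a b c x' z)

/-- `S1^[AB^O BC^L] ⊆ S2`. -/
theorem s1ABo_subset_s2 (p : Corr) (hp : IsCorrelation p) (h : MemS1ABo p) :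
    MemS2 p := by
  obtain ⟨n, q, nb, pC, ⟨hq0, hq1⟩, ⟨hnb0, hnb1, hnbA, hnbB⟩, hpC0, hpC1, hrep⟩ := h
  have hn : 0 < n := by
    by_contra hn
    push_neg at hn
    interval_cases n
    simp at hq1
  set l0 : Fin n := ⟨0, hn⟩
  refine ⟨⟨fun a x => ∑ b : Fin 2, nb a b x l0, fun c z => ∑ l, q l * pC c z l,
    ?_, ?_, ?_, ?_, ?_⟩, ?_, ?_⟩
  · intro a x
    exact Finset.sum_nonneg fun b _ => hnb0 a b x l0
  · intro x
    exact hnb1 x l0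
  · intro c z
    exact Finset.sum_nonneg fun l _ => mul_nonneg (hq0 l) (hpC0 c z l)
  · intro z
    calc ∑ c : Fin 2, ∑ l, q l * pC c z l = ∑ l, ∑ c : Fin 2, q l * pC c z l :=
          Finset.sum_comm
      _ = ∑ l, q l := by
          refine Finset.sum_congr rfl fun l _ => ?_
          rw [← Finset.mul_sum, hpC1 z l, mul_one]
      _ = 1 := hq1
  · intro a c x z
    simp only [hrep]
    have step : ∀ l, ∑ b : Fin 2, q l * nb a b x l * pC c z l
        = (∑ b : Fin 2, nb a b x l0) * (q l * pC c z l) := by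
      intro l
      rw [← hnbA a x l l0, Finset.sum_mul]
      exact Finset.sum_congr rfl fun b _ => by ring
    rw [Finset.sum_comm]
    calc ∑ l, ∑ b : Fin 2, q l * nb a b x l * pC c z l
        = ∑ l, (∑ b : Fin 2, nb a b x l0) * (q l * pC c z l) :=
          Finset.sum_congr rfl fun l _ => step l
      _ = (∑ b : Fin 2, nb a b x l0) * ∑ l, q l * pC c z l := by
          rw [Finset.mul_sum]
  · intro a b x z z'
    have key : ∀ z, ∑ c : Fin 2, p a b c x z = ∑ l, q l * nb a b x l := by
      intro z
      simp only [hrep]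
      rw [Finset.sum_comm]
      refine Finset.sum_congr rfl fun l _ => ?_
      calc ∑ c : Fin 2, q l * nb a b x l * pC c z l
          = q l * nb a b x l * ∑ c : Fin 2, pC c z l := by rw [Finset.mul_sum]
        _ = q l * nb a b x l := by rw [hpC1 z l, mul_one]
    rw [key z, key z']
  · intro b c x x' z
    have key : ∀ x, ∑ a : Fin 2, p a b c x z
        = ∑ l, (∑ a : Fin 2, nb a b x l) * (q l * pC c z l) := by
      intro x
      simp only [hrep]
      rw [Finset.sum_comm]
      refine Finset.sum_congr rfl fun l _ => ?_
      rw [Finset.sum_mul]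
      exact Finset.sum_congr rfl fun a _ => by ring
    rw [key x, key x']
    exact Finset.sum_congr rfl fun l _ => by rw [hnbB b x x' l]
end

section
/- Every correlation in S1^[AB^L BC^O] satisfies the no-signalling constraints defining S2; that is, S1^[AB^L BC^O] is contained in S2. -/
open Finset

/-- `S1^[AB^L BC^O] ⊆ S2`. -/
theorem s1BCo_subset_s2 (p : Corr) (hp : IsCorrelation p) (h : MemS1BCo p) :
    MemS2 p := by
  obtain ⟨n, q, pA, nb, ⟨hq0, hq1⟩, hpA0, hpA1, ⟨hnb0, hnb1, hnbC, hnbA⟩, hdec⟩ := h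
  have hn : 0 < n := by
    by_contra hn
    push_neg at hn
    interval_cases n
    simp at hq1
  have l0 : Fin n := ⟨0, hn⟩
  refine ⟨⟨fun a x => ∑ l, q l * pA a x l, fun c z => ∑ b : Fin 2, nb b c l0 z,
      ?_, ?_, ?_, ?_, ?_⟩, ?_, ?_⟩
  · intro a x
    exact Finset.sum_nonneg fun l _ => mul_nonneg (hq0 l) (hpA0 a x l)
  · intro x
    rw [Finset.sum_comm]
    calc ∑ l, ∑ a : Fin 2, q l * pA a x l
        = ∑ l, q l * ∑ a : Fin 2, pA a x l := by
          simp [Finset.mul_sum, mul_add]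
      _ = 1 := by simp [hpA1, hq1]
  · intro c z
    exact Finset.sum_nonneg fun b _ => hnb0 b c l0 z
  · intro z
    rw [Finset.sum_comm]
    exact hnb1 l0 z
  · intro a c x z
    simp only [hdec]
    rw [Finset.sum_comm, Finset.sum_mul]
    refine Finset.sum_congr rfl fun l _ => ?_
    rw [← Finset.mul_sum, hnbA c l0 l z]
  · intro a b x z z'
    simp only [hdec]
    rw [Finset.sum_comm]
    nth_rewrite 2 [Finset.sum_comm]
    refine Finset.sum_congr rfl fun l _ => ?_
    rw [← Finset.mul_sum, ← Finset.mul_sum, hnbC b l z z']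
  · intro b c x x' z
    simp only [hdec]
    rw [Finset.sum_comm]
    nth_rewrite 2 [Finset.sum_comm]
    refine Finset.sum_congr rfl fun l _ => ?_
    have h1 : ∀ x, ∑ a : Fin 2, q l * pA a x l * nb b c l z
        = q l * nb b c l z := by
      intro x
      calc ∑ a : Fin 2, q l * pA a x l * nb b c l z
          = q l * (∑ a : Fin 2, pA a x l) * nb b c l z := by
            rw [Finset.mul_sum, Finset.sum_mul]
        _ = q l * nb b c l z := by rw [hpA1]; ring
    rw [h1, h1]
end

section
/- If p is a classical 3-chain correlation (p in S0) such that pC(c|z) := sum_{a,b} p(a,b,c|x,z) is strictly positive for all c,z (for p in S0 this marginal is automatically independent of x), then for each z in {0,1} the conditional CHSH value satisfies |CHSH^z(p)| <= 2. -/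
open Finset

/-- Conditional correlator on Charlie's side:
`E^z_{x,c} = ∑_{a,b} (-1)^{a+b} p(a,b,c|x,z) / pC(c|z)`, where
`pC(c|z) = ∑_{a,b} p(a,b,c|x,z)` (independent of `x` for the sets considered). -/
noncomputable def Ecorr (p : Corr) (z x c : Fin 2) : ℝ :=
  (∑ a : Fin 2, ∑ b : Fin 2, (-1 : ℝ) ^ ((a : ℕ) + (b : ℕ)) * p a b c x z) /
    (∑ a : Fin 2, ∑ b : Fin 2, p a b c x z)

/-- Conditional CHSH value `CHSH^z(p) = E^z_{0,0} + E^z_{0,1} + E^z_{1,0} - E^z_{1,1}`. -/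
noncomputable def CHSHonC (p : Corr) (z : Fin 2) : ℝ :=
  Ecorr p z 0 0 + Ecorr p z 0 1 + Ecorr p z 1 0 - Ecorr p z 1 1

lemma chsh_point (a0 a1 b0 b1 : ℝ) (ha0 : |a0| ≤ 1) (ha1 : |a1| ≤ 1)
    (hb0 : |b0| ≤ 1) (hb1 : |b1| ≤ 1) :
    |a0 * b0 + a0 * b1 + a1 * b0 - a1 * b1| ≤ 2 := by
  rw [abs_le] at *
  obtain ⟨h1, h2⟩ := ha0
  obtain ⟨h3, h4⟩ := ha1
  obtain ⟨h5, h6⟩ := hb0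
  obtain ⟨h7, h8⟩ := hb1
  constructor <;> nlinarith [mul_nonneg (by linarith : (0:ℝ) ≤ 1 - a0) (by linarith : (0:ℝ) ≤ 1 - b0),
    mul_nonneg (by linarith : (0:ℝ) ≤ 1 + a0) (by linarith : (0:ℝ) ≤ 1 + b0),
    mul_nonneg (by linarith : (0:ℝ) ≤ 1 - a0) (by linarith : (0:ℝ) ≤ 1 + b0),
    mul_nonneg (by linarith : (0:ℝ) ≤ 1 + a0) (by linarith : (0:ℝ) ≤ 1 - b0),
    mul_nonneg (by linarith : (0:ℝ) ≤ 1 - a1) (by linarith : (0:ℝ) ≤ 1 - b1),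
    mul_nonneg (by linarith : (0:ℝ) ≤ 1 + a1) (by linarith : (0:ℝ) ≤ 1 + b1),
    mul_nonneg (by linarith : (0:ℝ) ≤ 1 - a1) (by linarith : (0:ℝ) ≤ 1 + b1),
    mul_nonneg (by linarith : (0:ℝ) ≤ 1 + a1) (by linarith : (0:ℝ) ≤ 1 - b1)]

lemma s0_chsh_aux (p : Corr)
    (n1 n2 : ℕ) (q1 : Fin n1 → ℝ) (q2 : Fin n2 → ℝ)
    (pA : Fin 2 → Fin 2 → Fin n1 → ℝ)
    (pB : Fin 2 → Fin n1 → Fin n2 → ℝ)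
    (pC : Fin 2 → Fin 2 → Fin n2 → ℝ)
    (hq1n : ∀ l, 0 ≤ q1 l) (hq1s : ∑ l, q1 l = 1)
    (hq2n : ∀ l, 0 ≤ q2 l) (hq2s : ∑ l, q2 l = 1)
    (hAn : ∀ a x l1, 0 ≤ pA a x l1) (hAs : ∀ x l1, ∑ a : Fin 2, pA a x l1 = 1)
    (hBn : ∀ b l1 l2, 0 ≤ pB b l1 l2) (hBs : ∀ l1 l2, ∑ b : Fin 2, pB b l1 l2 = 1)
    (hCn : ∀ c z l2, 0 ≤ pC c z l2) (hCs : ∀ z l2, ∑ c : Fin 2, pC c z l2 = 1)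
    (hform : ∀ a b c x z, p a b c x z =
      ∑ l1, ∑ l2, q1 l1 * q2 l2 * pA a x l1 * pB b l1 l2 * pC c z l2)
    (hpos : ∀ c x z : Fin 2, 0 < ∑ a : Fin 2, ∑ b : Fin 2, p a b c x z)
    (z : Fin 2) :
    |Ecorr p z 0 0 + Ecorr p z 0 1 + Ecorr p z 1 0 - Ecorr p z 1 1| ≤ 2 := by
  -- abbreviations
  set A : Fin 2 → Fin n1 → ℝ := fun x l1 => pA 0 x l1 - pA 1 x l1 with hA
  set B : Fin n1 → Fin n2 → ℝ := fun l1 l2 => pB 0 l1 l2 - pB 1 l1 l2 with hB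
  set N : Fin 2 → ℝ := fun c => ∑ l2, q2 l2 * pC c z l2 with hN
  -- denominator
  have den : ∀ x c : Fin 2, (∑ a : Fin 2, ∑ b : Fin 2, p a b c x z) = N c := by
    intro x c
    have : (∑ a : Fin 2, ∑ b : Fin 2, p a b c x z)
        = ∑ l1, ∑ l2, q1 l1 * (q2 l2 * pC c z l2) := by
      simp only [Fin.sum_univ_two, hform]
      rw [← Finset.sum_add_distrib, ← Finset.sum_add_distrib, ← Finset.sum_add_distrib]
      refine Finset.sum_congr rfl fun l1 _ => ?_
      rw [← Finset.sum_add_distrib, ← Finset.sum_add_distrib, ← Finset.sum_add_distrib]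
      refine Finset.sum_congr rfl fun l2 _ => ?_
      have h1 : pA 0 x l1 + pA 1 x l1 = 1 := by
        have := hAs x l1; rwa [Fin.sum_univ_two] at this
      have h2 : pB 0 l1 l2 + pB 1 l1 l2 = 1 := by
        have := hBs l1 l2; rwa [Fin.sum_univ_two] at this
      linear_combination (q1 l1 * q2 l2 * pC c z l2 * (pB 0 l1 l2 + pB 1 l1 l2)) * h1
        + (q1 l1 * q2 l2 * pC c z l2) * h2
    rw [this, ← Finset.sum_mul_sum, hq1s, one_mul]
  have Npos : ∀ c : Fin 2, 0 < N c := by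
    intro c; rw [← den 0 c]; exact hpos c 0 z
  -- numerator
  have num : ∀ x c : Fin 2,
      (∑ a : Fin 2, ∑ b : Fin 2, (-1 : ℝ) ^ ((a : ℕ) + (b : ℕ)) * p a b c x z)
        = ∑ l1, q1 l1 * A x l1 * (∑ l2, q2 l2 * pC c z l2 * B l1 l2) := by
    intro x c
    simp only [Fin.sum_univ_two, Fin.val_zero, Fin.val_one, hform, Finset.mul_sum]
    rw [← Finset.sum_add_distrib, ← Finset.sum_add_distrib, ← Finset.sum_add_distrib]
    refine Finset.sum_congr rfl fun l1 _ => ?_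
    rw [← Finset.sum_add_distrib, ← Finset.sum_add_distrib, ← Finset.sum_add_distrib]
    refine Finset.sum_congr rfl fun l2 _ => ?_
    simp only [hA, hB]
    norm_num
    ring
  -- Bt bounds
  have Bbound : ∀ l1 l2, |B l1 l2| ≤ 1 := by
    intro l1 l2
    have h2 : pB 0 l1 l2 + pB 1 l1 l2 = 1 := by
      have := hBs l1 l2; rwa [Fin.sum_univ_two] at this
    rw [abs_le]; constructor <;> simp only [hB] <;>
      [nlinarith [hBn 0 l1 l2, hBn 1 l1 l2]; nlinarith [hBn 0 l1 l2, hBn 1 l1 l2]]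
  have Abound : ∀ x l1, |A x l1| ≤ 1 := by
    intro x l1
    have h1 : pA 0 x l1 + pA 1 x l1 = 1 := by
      have := hAs x l1; rwa [Fin.sum_univ_two] at this
    rw [abs_le]; constructor <;> simp only [hA] <;>
      [nlinarith [hAn 0 x l1, hAn 1 x l1]; nlinarith [hAn 0 x l1, hAn 1 x l1]]
  set Bt : Fin n1 → Fin 2 → ℝ := fun l1 c => (∑ l2, q2 l2 * pC c z l2 * B l1 l2) / N c with hBt
  have Btbound : ∀ l1 c, |Bt l1 c| ≤ 1 := by
    intro l1 c
    rw [hBt, abs_div, abs_of_pos (Npos c), div_le_one (Npos c)]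
    calc |∑ l2, q2 l2 * pC c z l2 * B l1 l2| ≤ ∑ l2, |q2 l2 * pC c z l2 * B l1 l2| :=
          Finset.abs_sum_le_sum_abs _ _
      _ ≤ ∑ l2, q2 l2 * pC c z l2 := by
          refine Finset.sum_le_sum fun l2 _ => ?_
          rw [abs_mul, abs_of_nonneg (mul_nonneg (hq2n l2) (hCn c z l2))]
          calc q2 l2 * pC c z l2 * |B l1 l2| ≤ q2 l2 * pC c z l2 * 1 := by
                exact mul_le_mul_of_nonneg_left (Bbound l1 l2)
                  (mul_nonneg (hq2n l2) (hCn c z l2))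
            _ = q2 l2 * pC c z l2 := mul_one _
  -- Ecorr formula
  have Eform : ∀ x c : Fin 2, Ecorr p z x c = ∑ l1, q1 l1 * (A x l1 * Bt l1 c) := by
    intro x c
    rw [Ecorr, den x c, num x c, Finset.sum_div]
    refine Finset.sum_congr rfl fun l1 _ => ?_
    rw [hBt]
    field_simp
  -- combine
  rw [Eform 0 0, Eform 0 1, Eform 1 0, Eform 1 1,
    ← Finset.sum_add_distrib, ← Finset.sum_add_distrib, ← Finset.sum_sub_distrib]
  calc |∑ l1, (q1 l1 * (A 0 l1 * Bt l1 0) + q1 l1 * (A 0 l1 * Bt l1 1)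
          + q1 l1 * (A 1 l1 * Bt l1 0) - q1 l1 * (A 1 l1 * Bt l1 1))|
      ≤ ∑ l1, |q1 l1 * (A 0 l1 * Bt l1 0) + q1 l1 * (A 0 l1 * Bt l1 1)
          + q1 l1 * (A 1 l1 * Bt l1 0) - q1 l1 * (A 1 l1 * Bt l1 1)| :=
        Finset.abs_sum_le_sum_abs _ _
    _ ≤ ∑ l1, q1 l1 * 2 := by
        refine Finset.sum_le_sum fun l1 _ => ?_
        have : q1 l1 * (A 0 l1 * Bt l1 0) + q1 l1 * (A 0 l1 * Bt l1 1)
            + q1 l1 * (A 1 l1 * Bt l1 0) - q1 l1 * (A 1 l1 * Bt l1 1)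
            = q1 l1 * (A 0 l1 * Bt l1 0 + A 0 l1 * Bt l1 1
              + A 1 l1 * Bt l1 0 - A 1 l1 * Bt l1 1) := by ring
        rw [this, abs_mul, abs_of_nonneg (hq1n l1)]
        exact mul_le_mul_of_nonneg_left
          (chsh_point _ _ _ _ (Abound 0 l1) (Abound 1 l1) (Btbound l1 0) (Btbound l1 1))
          (hq1n l1)
    _ = 2 := by rw [← Finset.sum_mul, hq1s, one_mul]


/-- classical 3-chain correlations with strictly positive Charlie
marginal obey the conditional CHSH inequality `|CHSH^z(p)| ≤ 2`. -/
theorem s0_conditional_CHSH (p : Corr) (hp : IsCorrelation p) (h0 : MemS0 p)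
    (hpos : ∀ c x z : Fin 2, 0 < ∑ a : Fin 2, ∑ b : Fin 2, p a b c x z) :
    ∀ z : Fin 2, |CHSHonC p z| ≤ 2 := by
  obtain ⟨n1, n2, q1, q2, pA, pB, pC, ⟨hq1n, hq1s⟩, ⟨hq2n, hq2s⟩, hAn, hAs, hBn, hBs,
    hCn, hCs, hform⟩ := h0
  intro z
  rw [CHSHonC]
  exact s0_chsh_aux p n1 n2 q1 q2 pA pB pC hq1n hq1s hq2n hq2s hAn hAs hBn hBs hCn hCs
    hform hpos z
end

section
/- A classical source between Alice and Bob prohibits a conditional CHSH violation: if p is in S1^[AB^L BC^O] and pC(c|z) := sum_{a,b} p(a,b,c|x,z) is strictly positive for all c,z (for p in S1^[AB^L BC^O] this marginal is automatically independent of x), then for each z in {0,1} the conditional CHSH value satisfies |CHSH^z(p)| <= 2. -/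
open Finset

/-- a classical source between Alice and Bob prohibits a conditional
CHSH violation: `p ∈ S1^[AB^L BC^O]` with positive Charlie marginal implies
`|CHSH^z(p)| ≤ 2`. -/
theorem s1BCo_conditional_CHSH (p : Corr) (hp : IsCorrelation p) (h : MemS1BCo p)
    (hpos : ∀ c x z : Fin 2, 0 < ∑ a : Fin 2, ∑ b : Fin 2, p a b c x z) :
    ∀ z : Fin 2, |CHSHonC p z| ≤ 2 := by
  intro z
  obtain ⟨n, q, pA, nb, ⟨hq0, hq1⟩, hA0, hA1, ⟨hnb0, hnb1, hns1, hns2⟩, hpe⟩ := h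
  have hn : n ≠ 0 := by rintro rfl; simp at hq1
  have l0 : Fin n := ⟨0, Nat.pos_of_ne_zero hn⟩
  set m : Fin 2 → ℝ := fun c => nb 0 c l0 z + nb 1 c l0 z with hm
  have hnbsum : ∀ c l, nb 0 c l z + nb 1 c l z = m c := by
    intro c l
    simpa [Fin.sum_univ_two] using hns2 c l l0 z
  have hAsum : ∀ x l, pA 0 x l + pA 1 x l = 1 := by
    intro x l; simpa [Fin.sum_univ_two] using hA1 x l
  have hden : ∀ x c : Fin 2, (∑ a : Fin 2, ∑ b : Fin 2, p a b c x z) = m c := by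
    intro x c
    simp only [hpe, Fin.sum_univ_two, ← Finset.sum_add_distrib]
    calc (∑ l, (q l * pA 0 x l * nb 0 c l z + q l * pA 0 x l * nb 1 c l z +
          (q l * pA 1 x l * nb 0 c l z + q l * pA 1 x l * nb 1 c l z)))
        = ∑ l, q l * m c := by
          refine Finset.sum_congr rfl fun l _ => ?_
          have h1 := hnbsum c l
          have h2 := hAsum x l
          calc q l * pA 0 x l * nb 0 c l z + q l * pA 0 x l * nb 1 c l z +
                (q l * pA 1 x l * nb 0 c l z + q l * pA 1 x l * nb 1 c l z)
              = q l * ((pA 0 x l + pA 1 x l) * (nb 0 c l z + nb 1 c l z)) := by ring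
            _ = q l * m c := by rw [h1, h2]; ring
      _ = m c := by rw [← Finset.sum_mul, hq1, one_mul]
  have hmpos : ∀ c, 0 < m c := fun c => hden 0 c ▸ hpos c 0 z
  have hnum : ∀ x c : Fin 2,
      (∑ a : Fin 2, ∑ b : Fin 2, (-1 : ℝ) ^ ((a : ℕ) + (b : ℕ)) * p a b c x z)
        = ∑ l, q l * (pA 0 x l - pA 1 x l) * (nb 0 c l z - nb 1 c l z) := by
    intro x c
    have hpt : ∀ l, q l * (pA 0 x l - pA 1 x l) * (nb 0 c l z - nb 1 c l z)
        = q l * pA 0 x l * nb 0 c l z - q l * pA 0 x l * nb 1 c l z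
          - q l * pA 1 x l * nb 0 c l z + q l * pA 1 x l * nb 1 c l z := by
      intro l; ring
    simp only [hpe, Fin.sum_univ_two, hpt, Finset.sum_add_distrib,
      Finset.sum_sub_distrib]
    norm_num [Fin.val_zero, Fin.val_one]
    ring
  have hE : ∀ x c : Fin 2, Ecorr p z x c
      = (∑ l, q l * (pA 0 x l - pA 1 x l) * (nb 0 c l z - nb 1 c l z)) / m c := by
    intro x c; unfold Ecorr; rw [hnum, hden]
  have hCH : CHSHonC p z = ∑ l,
      (q l * (pA 0 0 l - pA 1 0 l) * (nb 0 0 l z - nb 1 0 l z) / m 0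
       + q l * (pA 0 0 l - pA 1 0 l) * (nb 0 1 l z - nb 1 1 l z) / m 1
       + q l * (pA 0 1 l - pA 1 1 l) * (nb 0 0 l z - nb 1 0 l z) / m 0
       - q l * (pA 0 1 l - pA 1 1 l) * (nb 0 1 l z - nb 1 1 l z) / m 1) := by
    unfold CHSHonC
    rw [hE 0 0, hE 0 1, hE 1 0, hE 1 1, Finset.sum_div, Finset.sum_div,
      Finset.sum_div, Finset.sum_div, ← Finset.sum_add_distrib,
      ← Finset.sum_add_distrib, ← Finset.sum_sub_distrib]
  rw [hCH]
  calc |∑ l, (q l * (pA 0 0 l - pA 1 0 l) * (nb 0 0 l z - nb 1 0 l z) / m 0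
       + q l * (pA 0 0 l - pA 1 0 l) * (nb 0 1 l z - nb 1 1 l z) / m 1
       + q l * (pA 0 1 l - pA 1 1 l) * (nb 0 0 l z - nb 1 0 l z) / m 0
       - q l * (pA 0 1 l - pA 1 1 l) * (nb 0 1 l z - nb 1 1 l z) / m 1)|
      ≤ ∑ l, |q l * (pA 0 0 l - pA 1 0 l) * (nb 0 0 l z - nb 1 0 l z) / m 0
       + q l * (pA 0 0 l - pA 1 0 l) * (nb 0 1 l z - nb 1 1 l z) / m 1
       + q l * (pA 0 1 l - pA 1 1 l) * (nb 0 0 l z - nb 1 0 l z) / m 0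
       - q l * (pA 0 1 l - pA 1 1 l) * (nb 0 1 l z - nb 1 1 l z) / m 1| :=
        Finset.abs_sum_le_sum_abs _ _
    _ ≤ ∑ l, q l * 2 := by
        refine Finset.sum_le_sum fun l _ => ?_
        set s := pA 0 0 l - pA 1 0 l with hs
        set t := pA 0 1 l - pA 1 1 l with ht
        set u := (nb 0 0 l z - nb 1 0 l z) / m 0 with hu
        set v := (nb 0 1 l z - nb 1 1 l z) / m 1 with hv
        have habs_s : |s| ≤ 1 := by
          rw [abs_le]
          constructor <;> [skip; skip] <;>
            (have := hA0 0 0 l; have := hA0 1 0 l; have := hAsum 0 l; rw [hs]; linarith)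
        have habs_t : |t| ≤ 1 := by
          rw [abs_le]
          constructor <;> [skip; skip] <;>
            (have := hA0 0 1 l; have := hA0 1 1 l; have := hAsum 1 l; rw [ht]; linarith)
        have habs_u : |u| ≤ 1 := by
          rw [hu, abs_div, abs_of_pos (hmpos 0), div_le_one (hmpos 0), abs_le]
          have := hnb0 0 0 l z; have := hnb0 1 0 l z; have := hnbsum 0 l
          constructor <;> linarith
        have habs_v : |v| ≤ 1 := by
          rw [hv, abs_div, abs_of_pos (hmpos 1), div_le_one (hmpos 1), abs_le]
          have := hnb0 0 1 l z; have := hnb0 1 1 l z; have := hnbsum 1 l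
          constructor <;> linarith
        have heq : q l * s * (nb 0 0 l z - nb 1 0 l z) / m 0
            + q l * s * (nb 0 1 l z - nb 1 1 l z) / m 1
            + q l * t * (nb 0 0 l z - nb 1 0 l z) / m 0
            - q l * t * (nb 0 1 l z - nb 1 1 l z) / m 1
            = q l * ((s + t) * u + (s - t) * v) := by
          rw [hu, hv]; field_simp; ring
        rw [heq, abs_mul, abs_of_nonneg (hq0 l)]
        have key : |(s + t) * u + (s - t) * v| ≤ 2 := by
          have h1 : |(s + t) * u + (s - t) * v| ≤ |s + t| * |u| + |s - t| * |v| := by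
            calc |(s + t) * u + (s - t) * v| ≤ |(s + t) * u| + |(s - t) * v| :=
                abs_add_le _ _
              _ = |s + t| * |u| + |s - t| * |v| := by rw [abs_mul, abs_mul]
          have h2 : |s + t| * |u| ≤ |s + t| :=
            mul_le_of_le_one_right (abs_nonneg _) habs_u
          have h3 : |s - t| * |v| ≤ |s - t| :=
            mul_le_of_le_one_right (abs_nonneg _) habs_v
          have h4 : |s + t| + |s - t| ≤ 2 := by
            have hs' := abs_le.mp habs_s
            have ht' := abs_le.mp habs_t
            rcases abs_cases (s + t) with ⟨h5, _⟩ | ⟨h5, _⟩ <;>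
              rcases abs_cases (s - t) with ⟨h6, _⟩ | ⟨h6, _⟩ <;> linarith
          linarith
        exact mul_le_mul_of_nonneg_left key (hq0 l)
    _ = 2 := by rw [← Finset.sum_mul, hq1, one_mul]
end

section
/- The Fritz correlation p_FritzR is a valid correlation in the minimal 3-chain scenario and belongs to S1^[AB^O BC^L]; a witnessing decomposition uses Lambda = {0,1} with uniform weights, the Tsirelson no-signalling box n(a,b|x,l) = (1/4)*(1 + (-1)^{a+b+x*l}/sqrt(2)), and pC(c|z,l) = 1 if c = l and 0 otherwise. -/
open Finset

/-- The Fritz correlation `p_FritzR(a,b,c|x,z) = (1/8)(1 + (-1)^{a+b+x·c}/√2)`. -/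
noncomputable def pFritzR : Corr := fun a b c x _z =>
  (1/8) * (1 + (-1 : ℝ) ^ ((a : ℕ) + (b : ℕ) + (x : ℕ) * (c : ℕ)) / Real.sqrt 2)

/-- The Tsirelson no-signalling box `n(a,b|x,l) = (1/4)(1 + (-1)^{a+b+x·l}/√2)`. -/
noncomputable def fritzBox : Fin 2 → Fin 2 → Fin 2 → Fin 2 → ℝ := fun a b x l =>
  (1/4) * (1 + (-1 : ℝ) ^ ((a : ℕ) + (b : ℕ) + (x : ℕ) * (l : ℕ)) / Real.sqrt 2)

lemma aux_nonneg (k : ℕ) : (0:ℝ) ≤ 1 + (-1:ℝ)^k / Real.sqrt 2 := by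
  have h2 : (1:ℝ) ≤ Real.sqrt 2 := by
    rw [show (1:ℝ) = Real.sqrt 1 by simp]
    exact Real.sqrt_le_sqrt (by norm_num)
  have hpos : (0:ℝ) < Real.sqrt 2 := by linarith
  have hb : |(-1:ℝ)^k / Real.sqrt 2| ≤ 1 := by
    rw [abs_div, abs_pow, abs_neg, abs_one, one_pow, abs_of_pos hpos]
    rw [div_le_one hpos]; exact h2
  have := (abs_le.mp hb).1; linarith

lemma aux_decomp (a b c x : Fin 2) :
    pFritzR a b c x 0 =
      ∑ l : Fin 2, (1/2 : ℝ) * fritzBox a b x l * (if c = l then (1 : ℝ) else 0) := by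
  fin_cases c <;> simp [pFritzR, fritzBox, Fin.sum_univ_two] <;> ring

/-- `p_FritzR` is a valid correlation belonging to `S1^[AB^O BC^L]`,
with the explicit witnessing decomposition: uniform weights on `Λ = {0,1}`, the
Tsirelson box, and `pC(c|z,l) = δ_{c,l}`. -/
theorem fritzR_in_s1ABo :
    IsCorrelation pFritzR ∧
    (IsWeights (fun _ : Fin 2 => (1/2 : ℝ)) ∧
     IsNSBox fritzBox ∧
     (∀ c z l : Fin 2, (0 : ℝ) ≤ if c = l then 1 else 0) ∧
     (∀ z l : Fin 2, ∑ c : Fin 2, (if c = l then (1 : ℝ) else 0) = 1) ∧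
     (∀ a b c x z : Fin 2, pFritzR a b c x z =
       ∑ l : Fin 2, (1/2 : ℝ) * fritzBox a b x l * (if c = l then (1 : ℝ) else 0))) ∧
    MemS1ABo pFritzR := by
  have hcorr : IsCorrelation pFritzR := by
    constructor
    · intro a b c x z
      have := aux_nonneg ((a:ℕ) + (b:ℕ) + (x:ℕ) * (c:ℕ))
      unfold pFritzR; positivity
    · intro x z
      fin_cases x <;> simp [pFritzR, Fin.sum_univ_two] <;> ring
  have hw : IsWeights (fun _ : Fin 2 => (1/2 : ℝ)) := by
    constructor
    · intro l; norm_num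
    · simp [Fin.sum_univ_two]
  have hns : IsNSBox fritzBox := by
    refine ⟨?_, ?_, ?_, ?_⟩
    · intro a b x l
      have := aux_nonneg ((a:ℕ) + (b:ℕ) + (x:ℕ) * (l:ℕ))
      unfold fritzBox; positivity
    · intro x l; fin_cases x <;> fin_cases l <;>
        simp [fritzBox, Fin.sum_univ_two] <;> ring
    · intro a x y y'; fin_cases a <;> fin_cases x <;> fin_cases y <;> fin_cases y' <;>
        simp [fritzBox, Fin.sum_univ_two] <;> ring
    · intro b x x' l; fin_cases b <;> fin_cases x <;> fin_cases x' <;> fin_cases l <;>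
        simp [fritzBox, Fin.sum_univ_two] <;> ring
  have hdec : ∀ a b c x z : Fin 2, pFritzR a b c x z =
      ∑ l : Fin 2, (1/2 : ℝ) * fritzBox a b x l * (if c = l then (1 : ℝ) else 0) := by
    intro a b c x z
    have : pFritzR a b c x z = pFritzR a b c x 0 := rfl
    rw [this]; exact aux_decomp a b c x
  refine ⟨hcorr, ⟨hw, hns, ?_, ?_, hdec⟩, ?_⟩
  · intro c z l; split <;> norm_num
  · intro z l; fin_cases l <;> simp [Fin.sum_univ_two]
  · exact ⟨2, _, fritzBox, fun c z l => if c = l then 1 else 0, hw, hns,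
      fun c z l => by simp only []; split <;> norm_num,
      fun z l => by simp [Fin.sum_univ_two], hdec⟩
end

section
/- For the Fritz correlation p_FritzR one has pC(c|z) = 1/2 for all c,z and the conditional CHSH value CHSH^z(p_FritzR) = 2*sqrt(2) for each z in {0,1}; consequently p_FritzR does not belong to S1^[AB^L BC^O], and in particular p_FritzR does not belong to S0. -/
open Finset

private lemma swap3 {n : ℕ} (f : Fin 2 → Fin 2 → Fin n → ℝ) :
    ∑ a : Fin 2, ∑ b : Fin 2, ∑ l, f a b l = ∑ l, ∑ a : Fin 2, ∑ b : Fin 2, f a b l :=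
  calc ∑ a : Fin 2, ∑ b : Fin 2, ∑ l, f a b l
      = ∑ a : Fin 2, ∑ l, ∑ b : Fin 2, f a b l :=
        Finset.sum_congr rfl fun _ _ => Finset.sum_comm
    _ = ∑ l, ∑ a : Fin 2, ∑ b : Fin 2, f a b l := Finset.sum_comm

private lemma memS0_to_memS1BCo {p : Corr} (h : MemS0 p) : MemS1BCo p := by
  obtain ⟨n1, n2, q1, q2, pA, pB, pC, hq1, hq2, hA1, hA2, hB1, hB2, hC1, hC2, hp⟩ := h
  refine ⟨n1, q1, pA, fun b c l z => ∑ l2, q2 l2 * pB b l l2 * pC c z l2,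
    hq1, hA1, hA2, ⟨?_, ?_, ?_, ?_⟩, ?_⟩
  · intro o1 o2 l z
    exact Finset.sum_nonneg fun l2 _ =>
      mul_nonneg (mul_nonneg (hq2.1 l2) (hB1 _ _ _)) (hC1 _ _ _)
  · intro l z
    rw [swap3, ← hq2.2]
    refine Finset.sum_congr rfl fun l2 _ => ?_
    have hb := hB2 l l2
    have hc := hC2 z l2
    simp only [Fin.sum_univ_two] at hb hc ⊢
    linear_combination (q2 l2 * (pC 0 z l2 + pC 1 z l2)) * hb + q2 l2 * hc
  · intro o1 l z z'
    have key : ∀ w : Fin 2, ∑ o2 : Fin 2, ∑ l2, q2 l2 * pB o1 l l2 * pC o2 w l2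
        = ∑ l2, q2 l2 * pB o1 l l2 := by
      intro w
      rw [Finset.sum_comm]
      refine Finset.sum_congr rfl fun l2 _ => ?_
      rw [show ∑ o2 : Fin 2, q2 l2 * pB o1 l l2 * pC o2 w l2
          = q2 l2 * pB o1 l l2 * ∑ o2 : Fin 2, pC o2 w l2 from (Finset.mul_sum _ _ _).symm,
        hC2, mul_one]
    rw [key, key]
  · intro o2 l l' z
    have key : ∀ m : Fin n1, ∑ o1 : Fin 2, ∑ l2, q2 l2 * pB o1 m l2 * pC o2 z l2
        = ∑ l2, q2 l2 * pC o2 z l2 := by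
      intro m
      rw [Finset.sum_comm]
      refine Finset.sum_congr rfl fun l2 _ => ?_
      rw [show ∑ o1 : Fin 2, q2 l2 * pB o1 m l2 * pC o2 z l2
          = (∑ o1 : Fin 2, pB o1 m l2) * (q2 l2 * pC o2 z l2) from by
            rw [Finset.sum_mul]; exact Finset.sum_congr rfl fun o1 _ => by ring,
        hB2, one_mul]
    rw [key, key]
  · intro a b c x z
    rw [hp]
    refine Finset.sum_congr rfl fun l1 _ => ?_
    rw [Finset.mul_sum]
    exact Finset.sum_congr rfl fun l2 _ => by ring

private lemma fritz_marg : ∀ c x z : Fin 2, ∑ a : Fin 2, ∑ b : Fin 2, pFritzR a b c x z = 1/2 := by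
  intro c x z
  fin_cases c <;> fin_cases x <;> simp [pFritzR, Fin.sum_univ_two] <;> ring

private lemma fritz_chsh : ∀ z : Fin 2, CHSHonC pFritzR z = 2 * Real.sqrt 2 := by
  intro z
  have h2 : Real.sqrt 2 * Real.sqrt 2 = 2 := Real.mul_self_sqrt (by norm_num)
  have h0 : Real.sqrt 2 > 0 := Real.sqrt_pos.mpr (by norm_num)
  have hne : Real.sqrt 2 ≠ 0 := ne_of_gt h0
  simp only [CHSHonC, Ecorr, pFritzR, Fin.sum_univ_two]
  norm_num
  field_simp
  ring_nf
  rw [inv_mul_eq_div, div_eq_iff hne]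
  linear_combination -2*h2

private lemma fritz_not_s1BCo : ¬ MemS1BCo pFritzR := by
  intro h
  obtain ⟨n, q, pA, nb, hq, hA1, hA2, ⟨hnb1, hnb2, hnb3, hnb4⟩, hp⟩ := h
  -- Step A: each conditional marginal of the box equals 1/2
  have hs : ∀ (c : Fin 2) (l : Fin n) (z : Fin 2), ∑ b : Fin 2, nb b c l z = 1/2 := by
    intro c l z
    have e : ∑ a : Fin 2, ∑ b : Fin 2, ∑ l', q l' * pA a 0 l' * nb b c l' z = 1/2 := by
      have hm := fritz_marg c 0 z
      simp only [hp] at hm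
      exact hm
    rw [swap3] at e
    have e2 : ∑ l', q l' * ∑ b : Fin 2, nb b c l' z = 1/2 := by
      rw [← e]
      refine (Finset.sum_congr rfl fun l' _ => ?_).symm
      have hA := hA2 0 l'
      simp only [Fin.sum_univ_two] at hA ⊢
      linear_combination (q l' * (nb 0 c l' z + nb 1 c l' z)) * hA
    have e3 : ∑ l', q l' * ∑ b : Fin 2, nb b c l' z
        = (∑ b : Fin 2, nb b c l z) := by
      calc ∑ l', q l' * ∑ b : Fin 2, nb b c l' z
          = ∑ l', q l' * ∑ b : Fin 2, nb b c l z :=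
            Finset.sum_congr rfl fun l' _ => by rw [hnb4 c l' l z]
        _ = (∑ l', q l') * (∑ b : Fin 2, nb b c l z) := by rw [Finset.sum_mul]
        _ = _ := by rw [hq.2, one_mul]
    linarith [e2, e3]
  -- Step B: express the correlators
  have hE : ∀ z x c : Fin 2, Ecorr pFritzR z x c
      = 2 * ∑ l, q l * ((pA 0 x l - pA 1 x l) * (nb 0 c l z - nb 1 c l z)) := by
    intro z x c
    have hnum : ∑ a : Fin 2, ∑ b : Fin 2, (-1 : ℝ) ^ ((a : ℕ) + (b : ℕ)) * pFritzR a b c x z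
        = ∑ l, q l * ((pA 0 x l - pA 1 x l) * (nb 0 c l z - nb 1 c l z)) := by
      simp only [hp, Finset.mul_sum]
      rw [swap3]
      refine Finset.sum_congr rfl fun l _ => ?_
      simp only [Fin.sum_univ_two]
      norm_num
      ring
    unfold Ecorr
    rw [hnum, fritz_marg c x z]
    ring
  -- Step C: the CHSH bound
  have hbound : CHSHonC pFritzR 0 ≤ 2 := by
    have hcomb : CHSHonC pFritzR 0 = 2 * ∑ l, q l *
        ((pA 0 0 l - pA 1 0 l) * ((nb 0 0 l 0 - nb 1 0 l 0) + (nb 0 1 l 0 - nb 1 1 l 0))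
        + (pA 0 1 l - pA 1 1 l) * ((nb 0 0 l 0 - nb 1 0 l 0) - (nb 0 1 l 0 - nb 1 1 l 0))) := by
      rw [CHSHonC, hE, hE, hE, hE]
      rw [show ∀ s1 s2 s3 s4 : ℝ, 2*s1 + 2*s2 + 2*s3 - 2*s4 = 2*(s1 + s2 + (s3 - s4)) from
        fun _ _ _ _ => by ring]
      congr 1
      rw [← Finset.sum_sub_distrib, ← Finset.sum_add_distrib, ← Finset.sum_add_distrib]
      exact Finset.sum_congr rfl fun l _ => by ring
    rw [hcomb]
    have hT : ∀ l, q l *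
        ((pA 0 0 l - pA 1 0 l) * ((nb 0 0 l 0 - nb 1 0 l 0) + (nb 0 1 l 0 - nb 1 1 l 0))
        + (pA 0 1 l - pA 1 1 l) * ((nb 0 0 l 0 - nb 1 0 l 0) - (nb 0 1 l 0 - nb 1 1 l 0)))
        ≤ q l := by
      intro l
      have hA0 := hA2 0 l; have hA1' := hA2 1 l
      have hs0 := hs 0 l 0; have hs1 := hs 1 l 0
      simp only [Fin.sum_univ_two] at hA0 hA1' hs0 hs1
      have n1 := hA1 0 0 l; have n2 := hA1 1 0 l; have n3 := hA1 0 1 l; have n4 := hA1 1 1 l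
      have m1 := hnb1 0 0 l 0; have m2 := hnb1 1 0 l 0
      have m3 := hnb1 0 1 l 0; have m4 := hnb1 1 1 l 0
      set u := pA 0 0 l - pA 1 0 l with hu
      set v := pA 0 1 l - pA 1 1 l with hv
      set B0 := nb 0 0 l 0 - nb 1 0 l 0 with hB0
      set B1 := nb 0 1 l 0 - nb 1 1 l 0 with hB1
      have hu1 : u ≤ 1 := by simp only [hu]; linarith
      have hu2 : -1 ≤ u := by simp only [hu]; linarith
      have hv1 : v ≤ 1 := by simp only [hv]; linarith
      have hv2 : -1 ≤ v := by simp only [hv]; linarith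
      have hB01 : B0 ≤ 1/2 := by simp only [hB0]; linarith
      have hB02 : -(1/2) ≤ B0 := by simp only [hB0]; linarith
      have hB11 : B1 ≤ 1/2 := by simp only [hB1]; linarith
      have hB12 : -(1/2) ≤ B1 := by simp only [hB1]; linarith
      have hTle : u * (B0 + B1) + v * (B0 - B1) ≤ 1 := by
        nlinarith [mul_nonneg (mul_nonneg (by linarith : (0:ℝ) ≤ 1 + u) (by linarith : (0:ℝ) ≤ 1 + v)) (by linarith : (0:ℝ) ≤ 1 - 2*B0),
          mul_nonneg (mul_nonneg (by linarith : (0:ℝ) ≤ 1 + u) (by linarith : (0:ℝ) ≤ 1 - v)) (by linarith : (0:ℝ) ≤ 1 - 2*B1),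
          mul_nonneg (mul_nonneg (by linarith : (0:ℝ) ≤ 1 - u) (by linarith : (0:ℝ) ≤ 1 + v)) (by linarith : (0:ℝ) ≤ 1 + 2*B1),
          mul_nonneg (mul_nonneg (by linarith : (0:ℝ) ≤ 1 - u) (by linarith : (0:ℝ) ≤ 1 - v)) (by linarith : (0:ℝ) ≤ 1 + 2*B0)]
      calc q l * (u * (B0 + B1) + v * (B0 - B1)) ≤ q l * 1 :=
            mul_le_mul_of_nonneg_left hTle (hq.1 l)
        _ = q l := mul_one _
    calc 2 * ∑ l, q l *
        ((pA 0 0 l - pA 1 0 l) * ((nb 0 0 l 0 - nb 1 0 l 0) + (nb 0 1 l 0 - nb 1 1 l 0))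
        + (pA 0 1 l - pA 1 1 l) * ((nb 0 0 l 0 - nb 1 0 l 0) - (nb 0 1 l 0 - nb 1 1 l 0)))
        ≤ 2 * ∑ l, q l := by
          have := Finset.sum_le_sum (fun l (_ : l ∈ Finset.univ) => hT l)
          linarith
      _ = 2 := by rw [hq.2]; norm_num
  rw [fritz_chsh 0] at hbound
  have h2 : Real.sqrt 2 * Real.sqrt 2 = 2 := Real.mul_self_sqrt (by norm_num)
  nlinarith [Real.sqrt_nonneg 2, h2]

/-- for the Fritz correlation, `pC(c|z) = 1/2`, the conditional CHSH
value equals `2√2` for each `z`; consequently `p_FritzR ∉ S1^[AB^L BC^O]`, and in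
particular `p_FritzR ∉ S0`. -/
theorem fritzR_CHSH_and_not_s1BCo :
    (∀ c x z : Fin 2, ∑ a : Fin 2, ∑ b : Fin 2, pFritzR a b c x z = 1/2) ∧
    (∀ z : Fin 2, CHSHonC pFritzR z = 2 * Real.sqrt 2) ∧
    ¬ MemS1BCo pFritzR ∧ ¬ MemS0 pFritzR :=
  ⟨fritz_marg, fritz_chsh, fritz_not_s1BCo,
    fun h => fritz_not_s1BCo (memS0_to_memS1BCo h)⟩
end

section
/- The two one-nonclassical-source sets are incomparable: S1^[AB^O BC^L] is not a subset of S1^[AB^L BC^O], and S1^[AB^L BC^O] is not a subset of S1^[AB^O BC^L]. -/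
open Finset

/-- PR box: `a ⊕ b = x·l`, outputs uniform. -/
noncomputable def nbPR (a b x l : Fin 2) : ℝ := if a + b = x * l then 1/2 else 0

/-- Charlie's response: `c = z·l` deterministically. -/
noncomputable def pCw (c z l : Fin 2) : ℝ := if c = z * l then 1 else 0

/-- The witness correlation in `S1^[AB^O BC^L]` but not in `S1^[AB^L BC^O]`. -/
noncomputable def p1 : Corr := fun a b c x z => ∑ l : Fin 2, (1/2 : ℝ) * nbPR a b x l * pCw c z l

/-- Mirror: exchange the roles of Alice and Charlie. -/
def mir (p : Corr) : Corr := fun a b c x z => p c b a z x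

lemma factor_zero {a b : ℝ} (ha : 0 < a) (hb : 0 ≤ b) (h : a * b = 0) : b = 0 := by
  rcases mul_eq_zero.mp h with h | h
  · exact absurd h ha.ne'
  · exact h

lemma mir_corr (p : Corr) (h : IsCorrelation p) : IsCorrelation (mir p) := by
  refine ⟨fun a b c x z => h.1 c b a z x, fun x z => ?_⟩
  have := h.2 z x
  simp only [Fin.sum_univ_two] at this ⊢
  unfold mir
  linarith

lemma mir_memA (p : Corr) (h : MemS1ABo p) : MemS1BCo (mir p) := by
  obtain ⟨n, q, nb, pC, hq, ⟨h0, h1, h3, h4⟩, hC0, hC1, he⟩ := h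
  refine ⟨n, q, (fun a x l => pC a x l), (fun b c l z => nb c b z l), hq,
    (fun a x l => hC0 a x l), (fun x l => hC1 x l),
    ⟨fun o1 o2 x y => h0 o2 o1 y x, fun x y => by rw [Finset.sum_comm]; exact h1 y x,
     fun o1 x y y' => h4 o1 y y' x, fun o2 x x' y => h3 o2 y x x'⟩, ?_⟩
  intro a b c x z
  show p c b a z x = _
  rw [he]
  exact Finset.sum_congr rfl (fun l _ => by ring)

lemma mir_memB (p : Corr) (h : MemS1BCo p) : MemS1ABo (mir p) := by
  obtain ⟨n, q, pA, nb, hq, hA0, hA1, ⟨h0, h1, h3, h4⟩, he⟩ := h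
  refine ⟨n, q, (fun a b x l => nb b a l x), (fun c z l => pA c z l), hq,
    ⟨fun o1 o2 x y => h0 o2 o1 y x, fun x y => by rw [Finset.sum_comm]; exact h1 y x,
     fun o1 x y y' => h4 o1 y y' x, fun o2 x x' y => h3 o2 y x x'⟩,
    (fun c z l => hA0 c z l), (fun z l => hA1 z l), ?_⟩
  intro a b c x z
  show p c b a z x = _
  rw [he]
  exact Finset.sum_congr rfl (fun l _ => by ring)

lemma p1_corr : IsCorrelation p1 := by
  constructor
  · intro a b c x z
    apply Finset.sum_nonneg
    intro l _
    unfold nbPR pCw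
    split <;> split <;> norm_num
  · intro x z
    fin_cases x <;> fin_cases z <;>
      (simp only [p1, nbPR, pCw, Fin.sum_univ_two, Fin.reduceAdd, Fin.reduceMul, Fin.reduceEq, Fin.zero_eta, Fin.mk_one, Fin.isValue, ite_true, ite_false] <;> norm_num)

lemma p1_memA : MemS1ABo p1 := by
  refine ⟨2, fun _ => 1/2, nbPR, pCw, ⟨fun _ => by norm_num, by
    norm_num [Fin.sum_univ_two]⟩, ⟨?_, ?_, ?_, ?_⟩, ?_, ?_, ?_⟩
  · intro o1 o2 x y; unfold nbPR; split <;> norm_num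
  · intro x y; fin_cases x <;> fin_cases y <;> (simp only [nbPR, Fin.sum_univ_two, Fin.reduceAdd, Fin.reduceMul, Fin.reduceEq, Fin.zero_eta, Fin.mk_one, Fin.isValue, ite_true, ite_false] <;> norm_num)
  · intro o1 x y y'
    fin_cases o1 <;> fin_cases x <;> fin_cases y <;> fin_cases y' <;>
      (simp only [nbPR, Fin.sum_univ_two, Fin.reduceAdd, Fin.reduceMul, Fin.reduceEq, Fin.zero_eta, Fin.mk_one, Fin.isValue, ite_true, ite_false] <;> norm_num)
  · intro o2 x x' y
    fin_cases o2 <;> fin_cases x <;> fin_cases x' <;> fin_cases y <;>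
      (simp only [nbPR, Fin.sum_univ_two, Fin.reduceAdd, Fin.reduceMul, Fin.reduceEq, Fin.zero_eta, Fin.mk_one, Fin.isValue, ite_true, ite_false] <;> norm_num)
  · intro c z l; unfold pCw; split <;> norm_num
  · intro z l; fin_cases z <;> fin_cases l <;> (simp only [pCw, Fin.sum_univ_two, Fin.reduceAdd, Fin.reduceMul, Fin.reduceEq, Fin.zero_eta, Fin.mk_one, Fin.isValue, ite_true, ite_false] <;> norm_num)
  · intro a b c x z; rfl

lemma p1_not_memB : ¬ MemS1BCo p1 := by
  rintro ⟨n, q, pA, nb, ⟨hq0, hq1⟩, hA0, hA1, ⟨h0, h1, h3, h4⟩, he⟩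
  -- there is a point in the support of q
  have hex : ∃ l, 0 < q l := by
    by_contra h
    push_neg at h
    have hz : ∀ l ∈ Finset.univ, q l = 0 := fun l _ => le_antisymm (h l) (hq0 l)
    rw [Finset.sum_eq_zero hz] at hq1
    norm_num at hq1
  obtain ⟨l0, hl0⟩ := hex
  -- the marginal of c at z = 1 is uniform, for every l
  have hmarg : ∀ (c : Fin 2) (l : Fin n), nb 0 c l 1 + nb 1 c l 1 = 1/2 := by
    intro c l
    have hK : ∀ l' : Fin n, nb 0 c l' 1 + nb 1 c l' 1 = nb 0 c l 1 + nb 1 c l 1 := by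
      intro l'
      have := h4 c l' l 1
      simpa [Fin.sum_univ_two] using this
    have expand : ∑ a : Fin 2, ∑ b : Fin 2, p1 a b c 1 1
        = ∑ l' : Fin n, (q l' * pA 0 1 l' * nb 0 c l' 1 + q l' * pA 0 1 l' * nb 1 c l' 1
          + q l' * pA 1 1 l' * nb 0 c l' 1 + q l' * pA 1 1 l' * nb 1 c l' 1) := by
      simp only [Fin.sum_univ_two, he, ← Finset.sum_add_distrib]
      exact Finset.sum_congr rfl (fun l' _ => by ring)
    have step : ∑ a : Fin 2, ∑ b : Fin 2, p1 a b c 1 1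
        = ∑ l' : Fin n, q l' * (nb 0 c l 1 + nb 1 c l 1) := by
      rw [expand]
      refine Finset.sum_congr rfl (fun l' _ => ?_)
      have hs := hA1 1 l'
      rw [Fin.sum_univ_two] at hs
      rw [← hK l']
      linear_combination (nb 0 c l' 1 + nb 1 c l' 1) * q l' * hs
    have hval : ∑ a : Fin 2, ∑ b : Fin 2, p1 a b c 1 1 = 1/2 := by
      fin_cases c <;> (simp only [p1, nbPR, pCw, Fin.sum_univ_two, Fin.reduceAdd, Fin.reduceMul, Fin.reduceEq, Fin.zero_eta, Fin.mk_one, Fin.isValue, ite_true, ite_false] <;> norm_num)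
    rw [step, ← Finset.sum_mul, hq1, one_mul] at hval
    exact hval
  -- zero constraints from x = 0, z = 1 (a must equal b)
  have hz4 : ∀ a b : Fin 2, (∀ c : Fin 2, p1 a b c 0 1 = 0) →
      ∀ l', q l' * pA a 0 l' * (nb b 0 l' 1 + nb b 1 l' 1) = 0 := by
    intro a b hp l'
    have e0 := he a b 0 0 1
    have e1 := he a b 1 0 1
    rw [hp 0] at e0
    rw [hp 1] at e1
    have hsum : ∑ l'' : Fin n, q l'' * pA a 0 l'' * (nb b 0 l'' 1 + nb b 1 l'' 1) = 0 := by
      have : ∑ l'' : Fin n, (q l'' * pA a 0 l'' * nb b 0 l'' 1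
          + q l'' * pA a 0 l'' * nb b 1 l'' 1) = 0 := by
        rw [Finset.sum_add_distrib, ← e0, ← e1]
        norm_num
      rw [← this]
      exact Finset.sum_congr rfl (fun l'' _ => by ring)
    have hnn : ∀ l'' ∈ Finset.univ, 0 ≤ q l'' * pA a 0 l'' * (nb b 0 l'' 1 + nb b 1 l'' 1) :=
      fun l'' _ => mul_nonneg (mul_nonneg (hq0 l'') (hA0 a 0 l''))
        (add_nonneg (h0 b 0 l'' 1) (h0 b 1 l'' 1))
    exact (Finset.sum_eq_zero_iff_of_nonneg hnn).mp hsum l' (Finset.mem_univ l')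
  -- zero constraints from x = 1, z = 1 (c must equal a + b)
  have hz5 : ∀ a b c : Fin 2, p1 a b c 1 1 = 0 →
      ∀ l', q l' * pA a 1 l' * nb b c l' 1 = 0 := by
    intro a b c hp l'
    have e := he a b c 1 1
    rw [hp] at e
    have hnn : ∀ l'' ∈ Finset.univ, 0 ≤ q l'' * pA a 1 l'' * nb b c l'' 1 :=
      fun l'' _ => mul_nonneg (mul_nonneg (hq0 l'') (hA0 a 1 l'')) (h0 b c l'' 1)
    exact (Finset.sum_eq_zero_iff_of_nonneg hnn).mp e.symm l' (Finset.mem_univ l')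
  -- instantiate at l0
  have z1 := hz4 0 1 (by intro c; fin_cases c <;> (simp only [p1, nbPR, pCw, Fin.sum_univ_two, Fin.reduceAdd, Fin.reduceMul, Fin.reduceEq, Fin.zero_eta, Fin.mk_one, Fin.isValue, ite_true, ite_false] <;> norm_num)) l0
  have z2 := hz4 1 0 (by intro c; fin_cases c <;> (simp only [p1, nbPR, pCw, Fin.sum_univ_two, Fin.reduceAdd, Fin.reduceMul, Fin.reduceEq, Fin.zero_eta, Fin.mk_one, Fin.isValue, ite_true, ite_false] <;> norm_num)) l0
  have w1 := hz5 0 0 1 (by (simp only [p1, nbPR, pCw, Fin.sum_univ_two, Fin.reduceAdd, Fin.reduceMul, Fin.reduceEq, Fin.zero_eta, Fin.mk_one, Fin.isValue, ite_true, ite_false] <;> norm_num)) l0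
  have w2 := hz5 1 0 0 (by (simp only [p1, nbPR, pCw, Fin.sum_univ_two, Fin.reduceAdd, Fin.reduceMul, Fin.reduceEq, Fin.zero_eta, Fin.mk_one, Fin.isValue, ite_true, ite_false] <;> norm_num)) l0
  have w3 := hz5 0 1 0 (by (simp only [p1, nbPR, pCw, Fin.sum_univ_two, Fin.reduceAdd, Fin.reduceMul, Fin.reduceEq, Fin.zero_eta, Fin.mk_one, Fin.isValue, ite_true, ite_false] <;> norm_num)) l0
  have w4 := hz5 1 1 1 (by (simp only [p1, nbPR, pCw, Fin.sum_univ_two, Fin.reduceAdd, Fin.reduceMul, Fin.reduceEq, Fin.zero_eta, Fin.mk_one, Fin.isValue, ite_true, ite_false] <;> norm_num)) l0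
  have hA'sum := hA1 0 l0
  have hAsum := hA1 1 l0
  rw [Fin.sum_univ_two] at hA'sum hAsum
  have hm0 := hmarg 0 l0
  have hm1 := hmarg 1 l0
  have hcase : 0 < pA 0 0 l0 ∨ 0 < pA 1 0 l0 := by
    by_contra h
    push_neg at h
    have := hA0 0 0 l0
    have := hA0 1 0 l0
    linarith [h.1, h.2]
  rcases hcase with hp | hp
  · -- pA(0|x=0) > 0 : forces nb 1 · = 0, hence nb 0 · = 1/2
    have hs : nb 1 0 l0 1 + nb 1 1 l0 1 = 0 :=
      factor_zero (mul_pos hl0 hp) (add_nonneg (h0 1 0 l0 1) (h0 1 1 l0 1)) z1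
    have h10 : nb 1 0 l0 1 = 0 := by linarith [h0 1 0 l0 1, h0 1 1 l0 1]
    have h11 : nb 1 1 l0 1 = 0 := by linarith [h0 1 0 l0 1, h0 1 1 l0 1]
    have hN00 : nb 0 0 l0 1 = 1/2 := by linarith
    have hN01 : nb 0 1 l0 1 = 1/2 := by linarith
    -- w1 : q * pA 0 1 * nb 0 1 = 0, w2 : q * pA 1 1 * nb 0 0 = 0
    rw [hN01] at w1
    rw [hN00] at w2
    have hA0z : pA 0 1 l0 = 0 :=
      factor_zero hl0 (hA0 0 1 l0) (by linarith)
    have hA1z : pA 1 1 l0 = 0 :=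
      factor_zero hl0 (hA0 1 1 l0) (by linarith)
    linarith
  · have hs : nb 0 0 l0 1 + nb 0 1 l0 1 = 0 :=
      factor_zero (mul_pos hl0 hp) (add_nonneg (h0 0 0 l0 1) (h0 0 1 l0 1)) z2
    have h00 : nb 0 0 l0 1 = 0 := by linarith [h0 0 0 l0 1, h0 0 1 l0 1]
    have h01 : nb 0 1 l0 1 = 0 := by linarith [h0 0 0 l0 1, h0 0 1 l0 1]
    have hN10 : nb 1 0 l0 1 = 1/2 := by linarith
    have hN11 : nb 1 1 l0 1 = 1/2 := by linarith
    rw [hN10] at w3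
    rw [hN11] at w4
    have hA0z : pA 0 1 l0 = 0 :=
      factor_zero hl0 (hA0 0 1 l0) (by linarith)
    have hA1z : pA 1 1 l0 = 0 :=
      factor_zero hl0 (hA0 1 1 l0) (by linarith)
    linarith


/-- the two one-nonclassical-source sets are incomparable. -/
theorem s1_sets_incomparable :
    (∃ p : Corr, IsCorrelation p ∧ MemS1ABo p ∧ ¬ MemS1BCo p) ∧
    (∃ p : Corr, IsCorrelation p ∧ MemS1BCo p ∧ ¬ MemS1ABo p) := by
  constructor
  · exact ⟨p1, p1_corr, p1_memA, p1_not_memB⟩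
  · refine ⟨mir p1, mir_corr p1 p1_corr, mir_memA p1 p1_memA, ?_⟩
    intro h
    exact p1_not_memB (mir_memA (mir p1) h)
end

section
/- Trivial-input characterization: let p(a,b,c|x) (a,b,c,x in {0,1}) be nonnegative with sum_{a,b,c} p(a,b,c|x) = 1 for both x, and suppose pC(c) := sum_{a,b} p(a,b,c|x) is independent of x and strictly positive for both c. Then p admits a classical 3-chain decomposition with trivial Charlie input, i.e. p(a,b,c|x) = sum_{l1,l2} q1(l1) q2(l2) pA(a|x,l1) pB(b|l1,l2) pC'(c|l2) for some finite sets Lambda1, Lambda2, probability weights q1, q2 and conditional distributions pA, pB, pC', if and only if both of the following hold: (i) sum_b p(a,b,c|x) = (sum_{b,c'} p(a,b,c'|x)) * pC(c) for all a,c,x; and (ii) the conditional bipartite correlation ptilde(a,b|x,c) := p(a,b,c|x)/pC(c) admits a local hidden-variable model, i.e. there exist a finite set Lambda, probability weights q on Lambda, and conditional distributions pA'(a|x,l) and pB'(b|c,l) with ptilde(a,b|x,c) = sum_{l} q(l) pA'(a|x,l) pB'(b|c,l). -/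
open Finset

/-- trivial-input characterization: `p(a,b,c|x)` with an
`x`-independent, strictly positive Charlie marginal `pC(c) = ∑_{a,b} p(a,b,c|x)`
admits a classical 3-chain decomposition with trivial Charlie input iff
(i) `∑_b p(a,b,c|x) = (∑_{b,c'} p(a,b,c'|x))·pC(c)` and (ii) the conditional
bipartite correlation `p(a,b,c|x)/pC(c)` admits a local hidden-variable model. -/
theorem trivial_input_characterization (p : Fin 2 → Fin 2 → Fin 2 → Fin 2 → ℝ)
    (hpos : ∀ a b c x, 0 ≤ p a b c x)
    (hnorm : ∀ x, ∑ a : Fin 2, ∑ b : Fin 2, ∑ c : Fin 2, p a b c x = 1)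
    (hindep : ∀ c x x', ∑ a : Fin 2, ∑ b : Fin 2, p a b c x =
      ∑ a : Fin 2, ∑ b : Fin 2, p a b c x')
    (hposC : ∀ c x, 0 < ∑ a : Fin 2, ∑ b : Fin 2, p a b c x) :
    (∃ (n1 n2 : ℕ) (q1 : Fin n1 → ℝ) (q2 : Fin n2 → ℝ)
       (pA : Fin 2 → Fin 2 → Fin n1 → ℝ) (pB : Fin 2 → Fin n1 → Fin n2 → ℝ)
       (pC' : Fin 2 → Fin n2 → ℝ),
       IsWeights q1 ∧ IsWeights q2 ∧
       (∀ a x l1, 0 ≤ pA a x l1) ∧ (∀ x l1, ∑ a : Fin 2, pA a x l1 = 1) ∧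
       (∀ b l1 l2, 0 ≤ pB b l1 l2) ∧ (∀ l1 l2, ∑ b : Fin 2, pB b l1 l2 = 1) ∧
       (∀ c l2, 0 ≤ pC' c l2) ∧ (∀ l2, ∑ c : Fin 2, pC' c l2 = 1) ∧
       (∀ a b c x, p a b c x =
         ∑ l1, ∑ l2, q1 l1 * q2 l2 * pA a x l1 * pB b l1 l2 * pC' c l2)) ↔
    ((∀ a c x, ∑ b : Fin 2, p a b c x =
        (∑ b : Fin 2, ∑ c' : Fin 2, p a b c' x) *
          (∑ a' : Fin 2, ∑ b' : Fin 2, p a' b' c 0)) ∧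
     (∃ (n : ℕ) (q : Fin n → ℝ) (pA' : Fin 2 → Fin 2 → Fin n → ℝ)
        (pB' : Fin 2 → Fin 2 → Fin n → ℝ),
        IsWeights q ∧
        (∀ a x l, 0 ≤ pA' a x l) ∧ (∀ x l, ∑ a : Fin 2, pA' a x l = 1) ∧
        (∀ b c l, 0 ≤ pB' b c l) ∧ (∀ c l, ∑ b : Fin 2, pB' b c l = 1) ∧
        (∀ a b c x, p a b c x / (∑ a' : Fin 2, ∑ b' : Fin 2, p a' b' c 0) =
          ∑ l, q l * pA' a x l * pB' b c l))) := by
  constructor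
  · rintro ⟨n1, n2, q1, q2, pA, pB, pC', hq1, hq2, hApos, hAnorm, hBpos, hBnorm,
      hCpos, hCnorm, hdec⟩
    have hb : ∀ a c x, ∑ b : Fin 2, p a b c x
        = ∑ l1, ∑ l2, q1 l1 * q2 l2 * pA a x l1 * pC' c l2 := by
      intro a c x
      simp only [hdec]
      rw [Finset.sum_comm]
      refine Finset.sum_congr rfl fun l1 _ => ?_
      rw [Finset.sum_comm]
      refine Finset.sum_congr rfl fun l2 _ => ?_
      have h : ∀ b : Fin 2, q1 l1 * q2 l2 * pA a x l1 * pB b l1 l2 * pC' c l2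
          = (q1 l1 * q2 l2 * pA a x l1 * pC' c l2) * pB b l1 l2 := fun b => by ring
      simp only [h, ← Finset.mul_sum, hBnorm, mul_one]
    have hA : ∀ a x, ∑ b : Fin 2, ∑ c' : Fin 2, p a b c' x
        = ∑ l1, q1 l1 * pA a x l1 := by
      intro a x
      rw [Finset.sum_comm]
      simp only [hb]
      rw [Finset.sum_comm]
      refine Finset.sum_congr rfl fun l1 _ => ?_
      rw [Finset.sum_comm]
      have e1 : ∀ l2, ∑ c' : Fin 2, q1 l1 * q2 l2 * pA a x l1 * pC' c' l2
          = (q1 l1 * pA a x l1) * q2 l2 := by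
        intro l2
        have h : ∀ c' : Fin 2, q1 l1 * q2 l2 * pA a x l1 * pC' c' l2
            = ((q1 l1 * pA a x l1) * q2 l2) * pC' c' l2 := fun _ => by ring
        simp only [h, ← Finset.mul_sum, hCnorm, mul_one]
      simp only [e1, ← Finset.mul_sum, hq2.2, mul_one]
    have hC : ∀ c, ∑ a : Fin 2, ∑ b : Fin 2, p a b c 0
        = ∑ l2, q2 l2 * pC' c l2 := by
      intro c
      simp only [hb]
      rw [Finset.sum_comm]
      have e1 : ∀ l1, ∑ a : Fin 2, ∑ l2, q1 l1 * q2 l2 * pA a 0 l1 * pC' c l2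
          = q1 l1 * ∑ l2, q2 l2 * pC' c l2 := by
        intro l1
        rw [Finset.sum_comm]
        have e2 : ∀ l2, ∑ a : Fin 2, q1 l1 * q2 l2 * pA a 0 l1 * pC' c l2
            = q1 l1 * (q2 l2 * pC' c l2) := by
          intro l2
          have h : ∀ a : Fin 2, q1 l1 * q2 l2 * pA a 0 l1 * pC' c l2
              = (q1 l1 * (q2 l2 * pC' c l2)) * pA a 0 l1 := fun _ => by ring
          simp only [h, ← Finset.mul_sum, hAnorm, mul_one]
        simp only [e2, ← Finset.mul_sum]
      simp only [e1]
      rw [← Finset.sum_mul, hq1.2, one_mul]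
    have hposC' : ∀ c, 0 < ∑ a' : Fin 2, ∑ b' : Fin 2, p a' b' c 0 :=
      fun c => hposC c 0
    refine ⟨?_, ?_⟩
    · intro a c x
      rw [hb, hA, hC, Finset.sum_mul_sum]
      refine Finset.sum_congr rfl fun l1 _ => Finset.sum_congr rfl fun l2 _ => by ring
    · refine ⟨n1, q1, pA,
        fun b c l1 => (∑ l2, q2 l2 * pB b l1 l2 * pC' c l2)
          / (∑ a' : Fin 2, ∑ b' : Fin 2, p a' b' c 0),
        hq1, hApos, hAnorm, ?_, ?_, ?_⟩
      · intro b c l1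
        apply div_nonneg _ (hposC' c).le
        exact Finset.sum_nonneg fun l2 _ =>
          mul_nonneg (mul_nonneg (hq2.1 l2) (hBpos b l1 l2)) (hCpos c l2)
      · intro c l1
        rw [← Finset.sum_div]
        rw [show (∑ b : Fin 2, ∑ l2, q2 l2 * pB b l1 l2 * pC' c l2)
            = ∑ l2, q2 l2 * pC' c l2 from ?_]
        · rw [← hC c]; exact div_self (hposC' c).ne'
        · rw [Finset.sum_comm]
          refine Finset.sum_congr rfl fun l2 _ => ?_
          have h : ∀ b : Fin 2, q2 l2 * pB b l1 l2 * pC' c l2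
              = (q2 l2 * pC' c l2) * pB b l1 l2 := fun _ => by ring
          simp only [h, ← Finset.mul_sum, hBnorm, mul_one]
      · intro a b c x
        rw [hdec, Finset.sum_div]
        refine Finset.sum_congr rfl fun l1 _ => ?_
        simp only [← mul_div_assoc]
        congr 1
        rw [Finset.mul_sum]
        refine Finset.sum_congr rfl fun l2 _ => by ring
  · rintro ⟨-, n, q, pA', pB', hq, hA'pos, hA'norm, hB'pos, hB'norm, hmod⟩
    refine ⟨n, 2, q, fun c => ∑ a : Fin 2, ∑ b : Fin 2, p a b c 0,
      pA', fun b l1 l2 => pB' b l2 l1, fun c l2 => if c = l2 then 1 else 0,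
      hq, ⟨fun c => (hposC c 0).le, ?_⟩, hA'pos, hA'norm,
      fun b l1 l2 => hB'pos b l2 l1, fun l1 l2 => hB'norm l2 l1,
      ?_, ?_, ?_⟩
    · have h := hnorm 0
      simp only [Fin.sum_univ_two] at h ⊢
      linarith
    · intro c l2
      dsimp only
      split <;> norm_num
    · intro l2
      simp [Finset.sum_ite_eq']
    · intro a b c x
      have inner : ∀ l1, ∑ l2 : Fin 2, q l1 * (∑ a' : Fin 2, ∑ b' : Fin 2, p a' b' l2 0)
            * pA' a x l1 * pB' b l2 l1 * (if c = l2 then 1 else 0)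
          = q l1 * (∑ a' : Fin 2, ∑ b' : Fin 2, p a' b' c 0)
            * pA' a x l1 * pB' b c l1 := by
        intro l1
        rw [Finset.sum_eq_single c]
        · simp
        · intro l2 _ hne
          rw [if_neg (Ne.symm hne), mul_zero]
        · simp
      simp only [inner]
      have hne : (∑ a' : Fin 2, ∑ b' : Fin 2, p a' b' c 0) ≠ 0 := (hposC c 0).ne'
      have h := hmod a b c x
      rw [div_eq_iff hne] at h
      rw [h, Finset.sum_mul]
      refine Finset.sum_congr rfl fun l1 _ => by ring
end

section
/- Uniform-deterministic representation of classical 3-chain correlations: a correlation p in the minimal 3-chain scenario belongs to S0 if and only if there exist measurable functions f_A : {0,1} x [0,1] -> {0,1}, f_C : {0,1} x [0,1] -> {0,1}, and a measurable function g : [0,1]^2 -> [0,1] such that for all a,b,c,x,z in {0,1}: p(a,b,c|x,z) equals the integral over (l1,l2) in [0,1]^2 with respect to Lebesgue measure of 1[f_A(x,l1) = a] * h_b(l1,l2) * 1[f_C(z,l2) = c], where h_1 := g and h_0 := 1 - g. -/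
open Finset

open MeasureTheory Set

/-!
Both directions pass through finite classical models in which Alice and Charlie respond
deterministically. Local randomness of Alice (resp. Charlie) can be absorbed into her source by
enlarging it to pairs (source value, response function `Fin 2 → Fin 2`), weighted by the
product of the response probabilities. A finite source is then simulated by a uniform variable
on `[0, 1]` via inverse-CDF sampling, i.e. by cutting `[0, 1]` into consecutive intervals of
the prescribed lengths; Bob's response becomes a step function `g`.
Conversely, given `fA`, `fC`, `g`, partition `[0, 1]` by the response profile
`l ↦ (fA 0 l, fA 1 l)` of Alice and likewise for Charlie. These finitely many cells are the
values of the new finite sources, and Bob's response on a pair of cells is the average of `g`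
over their product.
-/

section Fibers

variable {X ι : Type*} [MeasurableSpace X] [Fintype ι] [MeasurableSpace ι]
  [MeasurableSingletonClass ι] {μ : Measure X} {G : X → ι}

theorem integral_comp_mul_eq_sum (hG : Measurable G) (φ : ι → ℝ) {h : X → ℝ}
    (hh : Integrable h μ) :
    ∫ x, φ (G x) * h x ∂μ = ∑ i, φ i * ∫ x in G ⁻¹' {i}, h x ∂μ := by
  have hfiber : ∀ i, MeasurableSet (G ⁻¹' {i}) := fun i => hG (measurableSet_singleton i)
  have hsplit :
      (fun x => φ (G x) * h x) = fun x => ∑ i, φ i * (G ⁻¹' {i}).indicator h x := by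
    ext x
    rw [Finset.sum_eq_single (G x) (fun i _ hi => by simp [Ne.symm hi]) (by simp)]
    simp
  rw [hsplit, integral_finsetSum _ fun i _ => (hh.indicator (hfiber i)).const_mul (φ i)]
  simp_rw [integral_const_mul, integral_indicator (hfiber _)]

theorem integral_comp_eq_sum [IsFiniteMeasure μ] (hG : Measurable G) (φ : ι → ℝ) :
    ∫ x, φ (G x) ∂μ = ∑ i, μ.real (G ⁻¹' {i}) * φ i := by
  simpa [mul_comm] using integral_comp_mul_eq_sum hG φ (integrable_const (1 : ℝ) (μ := μ))

theorem sum_measureReal_fiber [IsProbabilityMeasure μ] (hG : Measurable G) :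
    ∑ i, μ.real (G ⁻¹' {i}) = 1 := by
  rw [sum_measureReal_preimage_singleton _ fun i _ => hG (measurableSet_singleton i)]
  simp

end Fibers

section DoubleIntegral

variable {X Y ι κ : Type*} [MeasurableSpace X] [MeasurableSpace Y]
  [Fintype ι] [MeasurableSpace ι] [MeasurableSingletonClass ι]
  [Fintype κ] [MeasurableSpace κ] [MeasurableSingletonClass κ]
  {μ : Measure X} {ν : Measure Y} {G : X → ι} {H : Y → κ}

theorem integral_integral_comp_eq_sum [IsFiniteMeasure μ] [IsFiniteMeasure ν]
    (hG : Measurable G) (hH : Measurable H) (Ψ : ι → κ → ℝ) :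
    ∫ x, ∫ y, Ψ (G x) (H y) ∂ν ∂μ =
      ∑ i, ∑ j, μ.real (G ⁻¹' {i}) * ν.real (H ⁻¹' {j}) * Ψ i j := by
  simp_rw [integral_comp_eq_sum hH (Ψ _)]
  rw [integral_comp_eq_sum hG fun i => ∑ j, ν.real (H ⁻¹' {j}) * Ψ i j]
  simp_rw [Finset.mul_sum, mul_assoc]

theorem integral_integral_mul_eq_sum_setIntegral_prod [SFinite μ] [SFinite ν]
    (hG : Measurable G) (hH : Measurable H) (φ : ι → ℝ) (ψ : κ → ℝ) {f : X × Y → ℝ}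
    (hf : Integrable f (μ.prod ν)) :
    ∫ x, ∫ y, φ (G x) * f (x, y) * ψ (H y) ∂ν ∂μ =
      ∑ i, ∑ j, φ i * ψ j * ∫ w in (G ⁻¹' {i}) ×ˢ (H ⁻¹' {j}), f w ∂(μ.prod ν) := by
  let χ : ι × κ → ℝ := fun u => φ u.1 * ψ u.2
  have hGH : Measurable (Prod.map G H) := hG.prodMap hH
  obtain ⟨C, hC⟩ := (Set.finite_range fun u => ‖χ u‖).bddAbove
  have hχf : Integrable (fun w => χ (Prod.map G H w) * f w) (μ.prod ν) :=
    hf.bdd_mul ((measurable_of_finite χ).comp hGH).aestronglyMeasurable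
      (ae_of_all _ fun w => hC (mem_range_self _))
  calc ∫ x, ∫ y, φ (G x) * f (x, y) * ψ (H y) ∂ν ∂μ
      = ∫ w, χ (Prod.map G H w) * f w ∂(μ.prod ν) := by
        rw [integral_prod _ hχf]
        congr with x
        congr with y
        simp only [χ, Prod.map]
        ring
    _ = _ := by
        rw [integral_comp_mul_eq_sum hGH χ hf, Fintype.sum_prod_type]
        simp only [χ, ← Set.singleton_prod_singleton, Set.preimage_prod_map_prod]

end DoubleIntegral

section Average

variable {X : Type*} [MeasurableSpace X] {ν : Measure X} [IsFiniteMeasure ν] {E : Set X}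
  {f : X → ℝ}

theorem setAverage_mem_Icc_zero_one (hf : ∀ x, f x ∈ Set.Icc 0 1) (hfi : IntegrableOn f E ν) :
    ⨍ x in E, f x ∂ν ∈ Set.Icc (0 : ℝ) 1 := by
  by_cases hE : ν E = 0
  · rw [Measure.restrict_eq_zero.mpr hE, average_zero_measure]
    simp
  · exact (convex_Icc 0 1).set_average_mem isClosed_Icc hE (measure_ne_top ν E)
      (ae_of_all _ hf) hfi

theorem setIntegral_ite_one_sub (hfi : IntegrableOn f E ν) (P : Prop) [Decidable P] :
    ∫ x in E, (if P then f x else 1 - f x) ∂ν =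
      ν.real E * (if P then ⨍ x in E, f x ∂ν else 1 - ⨍ x in E, f x ∂ν) := by
  have hav := measure_smul_setAverage f (measure_ne_top ν E)
  rw [smul_eq_mul] at hav
  split_ifs
  · exact hav.symm
  · rw [integral_sub (integrableOn_const (C := (1 : ℝ))) hfi, setIntegral_const,
      smul_eq_mul, mul_one, mul_sub, mul_one, hav]

end Average

instance : IsProbabilityMeasure (volume.restrict (Set.Icc (0 : ℝ) 1)) := ⟨by simp⟩

noncomputable def cutIndex (c : ℕ → ℝ) (m : ℕ) (l : ℝ) : ℕ := #{i ∈ range m | c (i + 1) < l}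

theorem cutIndex_le (c : ℕ → ℝ) (m : ℕ) (l : ℝ) : cutIndex c m l ≤ m :=
  (Finset.card_filter_le _ _).trans (Finset.card_range m).le

theorem monotone_cutIndex (c : ℕ → ℝ) (m : ℕ) : Monotone (cutIndex c m) := fun _ _ hll' =>
  Finset.card_le_card <| Finset.monotone_filter_right _ fun _ _ hi => hi.trans_le hll'

theorem cutIndex_eq_of_mem_Ioc {c : ℕ → ℝ} (hc : Monotone c) {m k : ℕ} (hk : k ≤ m) {l : ℝ}
    (hl : l ∈ Ioc (c k) (c (k + 1))) : cutIndex c m l = k := by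
  have hfilter : {i ∈ range m | c (i + 1) < l} = range k := by
    ext i
    simp only [Finset.mem_filter, Finset.mem_range]
    constructor
    · rintro ⟨-, hi⟩
      by_contra! hki
      exact (hl.2.trans (hc (Nat.succ_le_succ hki))).not_gt hi
    · intro hi
      exact ⟨hi.trans_le hk, (hc hi).trans_lt hl.1⟩
  rw [cutIndex, hfilter, Finset.card_range]

theorem sub_le_measureReal_cutIndex_preimage {c : ℕ → ℝ} (hc : Monotone c) (hc0 : c 0 = 0)
    {m k : ℕ} (hcm : c (m + 1) = 1) (hk : k ≤ m) :
    c (k + 1) - c k ≤ (volume.restrict (Set.Icc (0 : ℝ) 1)).real (cutIndex c m ⁻¹' {k}) := by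
  have hunit : Ioc (c k) (c (k + 1)) ⊆ Set.Icc 0 1 := Ioc_subset_Icc_self.trans
    (Icc_subset_Icc (hc0 ▸ hc k.zero_le) (hcm ▸ hc (Nat.succ_le_succ hk)))
  calc c (k + 1) - c k = (volume.restrict (Set.Icc (0 : ℝ) 1)).real (Ioc (c k) (c (k + 1))) := by
        rw [measureReal_restrict_apply measurableSet_Ioc, inter_eq_left.mpr hunit,
          Real.volume_real_Ioc_of_le (hc k.le_succ)]
    _ ≤ _ := measureReal_mono fun l hl => cutIndex_eq_of_mem_Ioc hc hk hl

theorem exists_measurable_measureReal_preimage_eq {ι : Type*} [Fintype ι] [MeasurableSpace ι]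
    [MeasurableSingletonClass ι] (w : ι → ℝ) (hw0 : ∀ i, 0 ≤ w i) (hw1 : ∑ i, w i = 1) :
    ∃ G : ℝ → ι, Measurable G ∧
      ∀ i, (volume.restrict (Set.Icc (0 : ℝ) 1)).real (G ⁻¹' {i}) = w i := by
  set μ := volume.restrict (Set.Icc (0 : ℝ) 1)
  obtain ⟨m, hm⟩ : ∃ m, Fintype.card ι = m + 1 := Nat.exists_eq_succ_of_ne_zero <|
    (Fintype.card_pos_iff.mpr <| Finset.univ_nonempty_iff.mp <|
      Finset.nonempty_of_sum_ne_zero (by rw [hw1]; exact one_ne_zero)).ne'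
  let e : ι ≃ Fin (m + 1) := (Fintype.equivFin ι).trans (finCongr hm)
  let v : ℕ → ℝ := fun k => if h : k < m + 1 then w (e.symm ⟨k, h⟩) else 0
  let c : ℕ → ℝ := fun k => ∑ i ∈ range k, v i
  have hc : Monotone c := fun k k' hkk' =>
    sum_le_sum_of_subset_of_nonneg (range_subset_range.mpr hkk') fun i _ _ => by
      unfold v
      split_ifs <;> simp [hw0]
  have hcm : c (m + 1) = 1 := by
    rw [← hw1, ← e.symm.sum_comp]
    show ∑ i ∈ range (m + 1), v i = _
    rw [← Fin.sum_univ_eq_sum_range]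
    simp [v, Fin.is_le]
  let G : ℝ → ι := fun l => e.symm ⟨cutIndex c m l, Nat.lt_succ_of_le (cutIndex_le c m l)⟩
  have hG : Measurable G :=
    (measurable_of_finite e.symm).comp (Monotone.measurable fun l l' hll' => by
      simpa using monotone_cutIndex c m hll')
  refine ⟨G, hG, ?_⟩
  have hle : ∀ i, w i ≤ μ.real (G ⁻¹' {i}) := fun i => calc
    w i = c (e i + 1) - c (e i) := by simp [c, Finset.sum_range_succ_sub_sum, v, Fin.is_le]
    _ ≤ μ.real (cutIndex c m ⁻¹' {(e i : ℕ)}) :=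
      sub_le_measureReal_cutIndex_preimage hc (by simp [c]) hcm (Nat.lt_succ_iff.mp (e i).isLt)
    _ ≤ μ.real (G ⁻¹' {i}) := measureReal_mono fun l hl => by simp_all [G]
  -- each fiber contains its interval, and both families of masses sum to `1`
  have hsum : ∑ i, w i = ∑ i, μ.real (G ⁻¹' {i}) := by rw [hw1, sum_measureReal_fiber hG]
  exact fun i => ((sum_eq_sum_iff_of_le fun i _ => hle i).mp hsum i (mem_univ i)).symm

theorem sum_prod_mul_ite_eq {X O : Type*} [Fintype X] [DecidableEq X] [Fintype O]
    [DecidableEq O] (P : X → O → ℝ) (hP : ∀ x, ∑ o, P x o = 1) (x : X) (a : O) :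
    ∑ s : X → O, (∏ x', P x' (s x')) * (if s x = a then 1 else 0) = P x a := by
  let t : X → Finset O := fun x' => if x' = x then {a} else Finset.univ
  have hfilter : (Finset.univ.filter fun s : X → O => s x = a) = Fintype.piFinset t := by
    ext s
    simp only [Finset.mem_filter, Finset.mem_univ, true_and, Fintype.mem_piFinset, t]
    constructor
    · intro h x'
      split_ifs with hx' <;> simp [hx', h]
    · intro h
      simpa using h x
  simp_rw [mul_ite, mul_one, mul_zero]
  rw [← Finset.sum_filter, hfilter, ← Finset.prod_univ_sum,
    Fintype.prod_eq_single x fun x' hx' => by simp only [t, if_neg hx', hP]]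
  simp [t]

theorem ite_eq_of_sum_fin_two_eq_one {r : Fin 2 → ℝ} (hr : ∑ b, r b = 1) (b : Fin 2) :
    (if b = 1 then r 1 else 1 - r 1) = r b := by
  rw [Fin.sum_univ_two] at hr
  fin_cases b
  · simp
    linarith
  · simp

structure IsDeterministicS0Model {Λ₁ Λ₂ : Type*} [Fintype Λ₁] [Fintype Λ₂] (p : Corr)
    (q₁ : Λ₁ → ℝ) (q₂ : Λ₂ → ℝ) (σA : Λ₁ → Fin 2 → Fin 2) (pB : Fin 2 → Λ₁ → Λ₂ → ℝ)
    (σC : Λ₂ → Fin 2 → Fin 2) : Prop where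
  q₁_nonneg : ∀ l, 0 ≤ q₁ l
  sum_q₁ : ∑ l, q₁ l = 1
  q₂_nonneg : ∀ l, 0 ≤ q₂ l
  sum_q₂ : ∑ l, q₂ l = 1
  pB_nonneg : ∀ b l₁ l₂, 0 ≤ pB b l₁ l₂
  sum_pB : ∀ l₁ l₂, ∑ b, pB b l₁ l₂ = 1
  eq_sum : ∀ a b c x z, p a b c x z = ∑ l₁, ∑ l₂, q₁ l₁ * q₂ l₂ *
    (if σA l₁ x = a then 1 else 0) * pB b l₁ l₂ * (if σC l₂ z = c then 1 else 0)

namespace IsDeterministicS0Model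

variable {Λ₁ Λ₂ : Type*} [Fintype Λ₁] [Fintype Λ₂] {p : Corr} {q₁ : Λ₁ → ℝ} {q₂ : Λ₂ → ℝ}
  {σA : Λ₁ → Fin 2 → Fin 2} {pB : Fin 2 → Λ₁ → Λ₂ → ℝ} {σC : Λ₂ → Fin 2 → Fin 2}

theorem memS0 (h : IsDeterministicS0Model p q₁ q₂ σA pB σC) : MemS0 p := by
  let e₁ := (Fintype.equivFin Λ₁).symm
  let e₂ := (Fintype.equivFin Λ₂).symm
  refine ⟨_, _, q₁ ∘ e₁, q₂ ∘ e₂, fun a x k => if σA (e₁ k) x = a then 1 else 0,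
    fun b k j => pB b (e₁ k) (e₂ j), fun c z j => if σC (e₂ j) z = c then 1 else 0,
    ⟨fun _ => h.q₁_nonneg _, by rw [Function.comp_def, e₁.sum_comp, h.sum_q₁]⟩,
    ⟨fun _ => h.q₂_nonneg _, by rw [Function.comp_def, e₂.sum_comp, h.sum_q₂]⟩,
    fun _ _ _ => by positivity, fun _ _ => by simp, fun _ _ _ => h.pB_nonneg _ _ _,
    fun _ _ => h.sum_pB _ _, fun _ _ _ => by positivity, fun _ _ => by simp,
    fun a b c x z => ?_⟩
  rw [h.eq_sum, ← e₁.sum_comp]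
  exact Finset.sum_congr rfl fun k _ => (e₂.sum_comp _).symm

theorem pB_le_one (h : IsDeterministicS0Model p q₁ q₂ σA pB σC) (b : Fin 2) (l₁ : Λ₁)
    (l₂ : Λ₂) : pB b l₁ l₂ ≤ 1 := by
  rw [← h.sum_pB l₁ l₂]
  exact Finset.single_le_sum (fun b _ => h.pB_nonneg b l₁ l₂) (mem_univ b)

theorem exists_uniform_deterministic [MeasurableSpace Λ₁] [MeasurableSingletonClass Λ₁]
    [MeasurableSpace Λ₂] [MeasurableSingletonClass Λ₂]
    (h : IsDeterministicS0Model p q₁ q₂ σA pB σC) :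
    ∃ (fA : Fin 2 → ℝ → Fin 2) (fC : Fin 2 → ℝ → Fin 2) (g : ℝ → ℝ → ℝ),
      (∀ x, Measurable (fA x)) ∧ (∀ z, Measurable (fC z)) ∧
      Measurable (Function.uncurry g) ∧
      (∀ l1 l2, 0 ≤ g l1 l2 ∧ g l1 l2 ≤ 1) ∧
      (∀ a b c x z, p a b c x z =
        ∫ l1 in Set.Icc (0 : ℝ) 1, ∫ l2 in Set.Icc (0 : ℝ) 1,
          (if fA x l1 = a then (1 : ℝ) else 0) *
            (if b = 1 then g l1 l2 else 1 - g l1 l2) *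
            (if fC z l2 = c then (1 : ℝ) else 0)) := by
  obtain ⟨G₁, hG₁, hq₁⟩ := exists_measurable_measureReal_preimage_eq q₁ h.q₁_nonneg h.sum_q₁
  obtain ⟨G₂, hG₂, hq₂⟩ := exists_measurable_measureReal_preimage_eq q₂ h.q₂_nonneg h.sum_q₂
  refine ⟨fun x l => σA (G₁ l) x, fun z l => σC (G₂ l) z, fun l₁ l₂ => pB 1 (G₁ l₁) (G₂ l₂),
    fun x => (measurable_of_finite (σA · x)).comp hG₁,
    fun z => (measurable_of_finite (σC · z)).comp hG₂,
    (measurable_of_finite fun l : Λ₁ × Λ₂ => pB 1 l.1 l.2).comp (hG₁.prodMap hG₂),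
    fun _ _ => ⟨h.pB_nonneg _ _ _, h.pB_le_one _ _ _⟩, fun a b c x z => ?_⟩
  simp only [ite_eq_of_sum_fin_two_eq_one (h.sum_pB _ _)]
  rw [integral_integral_comp_eq_sum hG₁ hG₂
    fun l₁ l₂ => (if σA l₁ x = a then 1 else 0) * pB b l₁ l₂ * (if σC l₂ z = c then 1 else 0)]
  simp only [hq₁, hq₂, h.eq_sum, mul_assoc]

end IsDeterministicS0Model

theorem MemS0.exists_isDeterministicS0Model {p : Corr} (h : MemS0 p) :
    ∃ (n₁ n₂ : ℕ) (q₁ : Fin n₁ × (Fin 2 → Fin 2) → ℝ) (q₂ : Fin n₂ × (Fin 2 → Fin 2) → ℝ)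
      (pB : Fin 2 → Fin n₁ → Fin n₂ → ℝ),
      IsDeterministicS0Model p q₁ q₂ Prod.snd (fun b l₁ l₂ => pB b l₁.1 l₂.1) Prod.snd := by
  obtain ⟨n₁, n₂, q₁, q₂, pA, pB, pC, ⟨hq₁0, hq₁⟩, ⟨hq₂0, hq₂⟩, hA0, hA, hB0, hB, hC0, hC, hp⟩ :=
    h
  have sum_prod : ∀ P : Fin 2 → Fin 2 → ℝ, (∀ x, ∑ o, P x o = 1) →
      ∑ s : Fin 2 → Fin 2, ∏ x, P x (s x) = 1 := fun P hP => by
    rw [← Fintype.prod_sum]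
    simp [hP]
  refine ⟨n₁, n₂, fun l => q₁ l.1 * ∏ x, pA (l.2 x) x l.1,
    fun l => q₂ l.1 * ∏ z, pC (l.2 z) z l.1, pB,
    { q₁_nonneg := fun l => mul_nonneg (hq₁0 _) (Finset.prod_nonneg fun x _ => hA0 _ _ _)
      sum_q₁ := ?_
      q₂_nonneg := fun l => mul_nonneg (hq₂0 _) (Finset.prod_nonneg fun z _ => hC0 _ _ _)
      sum_q₂ := ?_
      pB_nonneg := fun b _ _ => hB0 b _ _
      sum_pB := fun _ _ => hB _ _
      eq_sum := fun a b c x z => ?_ }⟩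
  · simp_rw [Fintype.sum_prod_type, ← Finset.mul_sum, sum_prod _ (hA · _), mul_one, hq₁]
  · simp_rw [Fintype.sum_prod_type, ← Finset.mul_sum, sum_prod _ (hC · _), mul_one, hq₂]
  rw [hp]
  simp only [Fintype.sum_prod_type]
  refine Finset.sum_congr rfl fun k _ => ?_
  conv_rhs => rw [Finset.sum_comm]
  refine Finset.sum_congr rfl fun j _ => ?_
  rw [← sum_prod_mul_ite_eq (fun x o => pA o x k) (hA · k) x a,
    ← sum_prod_mul_ite_eq (fun z o => pC o z j) (hC · j) z c]
  simp only [Finset.mul_sum, Finset.sum_mul]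
  rw [Finset.sum_comm]
  exact Finset.sum_congr rfl fun s _ => Finset.sum_congr rfl fun t _ => by ring

theorem exists_isDeterministicS0Model_of_uniform {p : Corr} {fA fC : Fin 2 → ℝ → Fin 2}
    {g : ℝ → ℝ → ℝ} (hA : ∀ x, Measurable (fA x)) (hC : ∀ z, Measurable (fC z))
    (hg : Measurable (Function.uncurry g)) (hg01 : ∀ l1 l2, 0 ≤ g l1 l2 ∧ g l1 l2 ≤ 1)
    (hp : ∀ a b c x z, p a b c x z =
      ∫ l1 in Set.Icc (0 : ℝ) 1, ∫ l2 in Set.Icc (0 : ℝ) 1,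
        (if fA x l1 = a then (1 : ℝ) else 0) *
          (if b = 1 then g l1 l2 else 1 - g l1 l2) *
          (if fC z l2 = c then (1 : ℝ) else 0)) :
    ∃ (q₁ q₂ : (Fin 2 → Fin 2) → ℝ) (pB : Fin 2 → (Fin 2 → Fin 2) → (Fin 2 → Fin 2) → ℝ),
      IsDeterministicS0Model p q₁ q₂ id pB id := by
  set μ := volume.restrict (Set.Icc (0 : ℝ) 1)
  let GA : ℝ → Fin 2 → Fin 2 := fun l x => fA x l
  let GC : ℝ → Fin 2 → Fin 2 := fun l z => fC z l
  have hGA : Measurable GA := measurable_pi_lambda _ hA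
  have hGC : Measurable GC := measurable_pi_lambda _ hC
  have hgi : Integrable (Function.uncurry g) (μ.prod μ) :=
    Integrable.of_bound hg.aestronglyMeasurable 1 (ae_of_all _ fun w => by
      rw [Real.norm_eq_abs, abs_le, Function.uncurry_def]
      constructor <;> linarith [hg01 w.1 w.2])
  let gAvg : (Fin 2 → Fin 2) → (Fin 2 → Fin 2) → ℝ := fun s t =>
    ⨍ w in (GA ⁻¹' {s}) ×ˢ (GC ⁻¹' {t}), Function.uncurry g w ∂(μ.prod μ)
  have hgAvg : ∀ s t, gAvg s t ∈ Set.Icc 0 1 := fun s t =>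
    setAverage_mem_Icc_zero_one (fun w => hg01 w.1 w.2) hgi.integrableOn
  refine ⟨fun s => μ.real (GA ⁻¹' {s}), fun t => μ.real (GC ⁻¹' {t}),
    fun b s t => if b = 1 then gAvg s t else 1 - gAvg s t,
    { q₁_nonneg := fun _ => measureReal_nonneg
      sum_q₁ := sum_measureReal_fiber hGA
      q₂_nonneg := fun _ => measureReal_nonneg
      sum_q₂ := sum_measureReal_fiber hGC
      pB_nonneg := fun b s t => ?_
      sum_pB := fun _ _ => by simp [Fin.sum_univ_two]
      eq_sum := fun a b c x z => ?_ }⟩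
  · split_ifs
    exacts [(hgAvg s t).1, sub_nonneg.mpr (hgAvg s t).2]
  have hbi : Integrable (fun w => if b = 1 then Function.uncurry g w else 1 - Function.uncurry g w)
      (μ.prod μ) := by
    split_ifs
    exacts [hgi, (integrable_const 1).sub hgi]
  rw [hp]
  refine (integral_integral_mul_eq_sum_setIntegral_prod hGA hGC (fun s => if s x = a then 1 else 0)
    (fun t => if t z = c then 1 else 0) hbi).trans
    (Finset.sum_congr rfl fun s _ => Finset.sum_congr rfl fun t _ => ?_)
  rw [setIntegral_ite_one_sub hgi.integrableOn, measureReal_prod_prod]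
  simp only [id, gAvg]
  ring

open MeasureTheory

theorem s0_uniform_deterministic_general (p : Corr) :
    MemS0 p ↔
    ∃ (fA : Fin 2 → ℝ → Fin 2) (fC : Fin 2 → ℝ → Fin 2) (g : ℝ → ℝ → ℝ),
      (∀ x, Measurable (fA x)) ∧ (∀ z, Measurable (fC z)) ∧
      Measurable (Function.uncurry g) ∧
      (∀ l1 l2, 0 ≤ g l1 l2 ∧ g l1 l2 ≤ 1) ∧
      (∀ a b c x z, p a b c x z =
        ∫ l1 in Set.Icc (0 : ℝ) 1, ∫ l2 in Set.Icc (0 : ℝ) 1,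
          (if fA x l1 = a then (1 : ℝ) else 0) *
            (if b = 1 then g l1 l2 else 1 - g l1 l2) *
            (if fC z l2 = c then (1 : ℝ) else 0)) := by
  constructor
  · intro h
    obtain ⟨_, _, _, _, _, hmodel⟩ := h.exists_isDeterministicS0Model
    exact hmodel.exists_uniform_deterministic
  · rintro ⟨_, _, _, hA, hC, hg, hg01, hp⟩
    obtain ⟨_, _, _, hmodel⟩ := exists_isDeterministicS0Model_of_uniform hA hC hg hg01 hp
    exact hmodel.memS0

/-- uniform-deterministic representation of `S0`: `p ∈ S0` iff it
arises from measurable deterministic response functions for Alice and Charlie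
and a measurable Bob response `g` on `[0,1]²` with Lebesgue measure. -/
theorem s0_uniform_deterministic (p : Corr) (hp : IsCorrelation p) :
    MemS0 p ↔
    ∃ (fA : Fin 2 → ℝ → Fin 2) (fC : Fin 2 → ℝ → Fin 2) (g : ℝ → ℝ → ℝ),
      (∀ x, Measurable (fA x)) ∧ (∀ z, Measurable (fC z)) ∧
      Measurable (Function.uncurry g) ∧
      (∀ l1 l2, 0 ≤ g l1 l2 ∧ g l1 l2 ≤ 1) ∧
      (∀ a b c x z, p a b c x z =
        ∫ l1 in Set.Icc (0 : ℝ) 1, ∫ l2 in Set.Icc (0 : ℝ) 1,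
          (if fA x l1 = a then (1 : ℝ) else 0) *
            (if b = 1 then g l1 l2 else 1 - g l1 l2) *
            (if fC z l2 = c then (1 : ℝ) else 0)) :=
  s0_uniform_deterministic_general p
end
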